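/- arXiv:2404.12574 — 8 statements merged into one kernel-verified Lean document; each statement's English description precedes it below -/
import Mathlib

section
/- Suppose the set of admissible curves for the data (z0, v0, zf, vf, t_f) is nonempty. Then there exists an admissible curve z* whose maximum curvature equals the infimum of the maximum curvature over all admissible curves for this data; that is, Problem (P) has a minimiser. -/
/-!
An admissible curve on `[a, b]` is determined by its velocity `z' = F`, a unit-vector-valued
`K`-Lipschitz map with prescribed endpoint values and with `∫ F = z(b) - z(a)`; conversely
every such `F` integrates to an admissible curve of maximum curvature at most `K`. For each
`K` these velocities form a closed, uniformly bounded, equicontinuous, hence compact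
(Arzelà–Ascoli) set of continuous maps. Taking `K` down to the infimal curvature gives a
decreasing sequence of nonempty compact sets, and any point of their intersection is the
velocity of a minimiser.
-/

open Set MeasureTheory Real

noncomputable section

/-- Points of the Euclidean plane. -/
abbrev Pt : Type := EuclideanSpace ℝ (Fin 2)

/-- The point of the plane with coordinates `(x, y)`. -/
def pt (x y : ℝ) : Pt := (WithLp.equiv 2 (Fin 2 → ℝ)).symm ![x, y]

/-- Rotation of the plane by `π/2`. -/
def J (v : Pt) : Pt := pt (-(v 1)) (v 0)

/-- `z`, with derivative `z'`, is an admissible curve on `[t1, t2]` for the oriented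
endpoint data `(p0, u0)`, `(p1, u1)`: it is differentiable with Lipschitz (hence
continuous) derivative `z'`, has unit speed, and matches the endpoint data. -/
def AdmissibleOn (t1 t2 : ℝ) (p0 u0 p1 u1 : Pt) (z z' : ℝ → Pt) : Prop :=
  (∀ t ∈ Icc t1 t2, HasDerivWithinAt z (z' t) (Icc t1 t2) t) ∧
  (∃ K : NNReal, LipschitzOnWith K z' (Icc t1 t2)) ∧
  (∀ t ∈ Icc t1 t2, ‖z' t‖ = 1) ∧
  z t1 = p0 ∧ z t2 = p1 ∧ z' t1 = u0 ∧ z' t2 = u1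

/-- The maximum curvature of a unit-speed curve with derivative `z'` on the set `s`:
the least Lipschitz constant of `z'` on `s` (equivalently, the essential supremum
of the norm of the second derivative). -/
def maxCurvOn (s : Set ℝ) (z' : ℝ → Pt) : ℝ :=
  sInf {a : ℝ | 0 ≤ a ∧ LipschitzOnWith (Real.toNNReal a) z' s}

/-- The piece `[s1, s2]` of the unit-speed curve with derivative `z'` is a circular
arc of signed curvature `ω`: `z'' = ω • J z'` a.e. there. -/
def IsArcOn (z' : ℝ → Pt) (ω s1 s2 : ℝ) : Prop :=
  ∀ᵐ t ∂volume, t ∈ Ioo s1 s2 → HasDerivAt z' (ω • J (z' t)) t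

/-- The piece `[s1, s2]` of the unit-speed curve with derivative `z'` is a straight
line segment: `z'` is constant there. -/
def IsLineOn (z' : ℝ → Pt) (s1 s2 : ℝ) : Prop :=
  ∀ s ∈ Icc s1 s2, ∀ t ∈ Icc s1 s2, z' s = z' t

/-- The piece `[s1, s2]` is a full circular loop of curvature `a`: a circular arc of
signed curvature `±a` whose turning angle is a positive integer multiple of `2π`. -/
def IsFullLoopOn (z' : ℝ → Pt) (a s1 s2 : ℝ) : Prop :=
  ∃ ω : ℝ, |ω| = a ∧ IsArcOn z' ω s1 s2 ∧ ∃ k : ℕ, 0 < k ∧ a * (s2 - s1) = 2 * π * k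

open BoundedContinuousFunction
open scoped NNReal

section MaxCurv

variable {s : Set ℝ} {z' : ℝ → Pt}

lemma maxCurvOn_nonneg : 0 ≤ maxCurvOn s z' :=
  Real.sInf_nonneg fun _ ha => ha.1

lemma maxCurvOn_le {K : ℝ≥0} (h : LipschitzOnWith K z' s) : maxCurvOn s z' ≤ K :=
  csInf_le ⟨0, fun _ ha => ha.1⟩ ⟨K.2, by rwa [Real.toNNReal_coe]⟩

lemma lipschitzOnWith_maxCurvOn (h : ∃ K : ℝ≥0, LipschitzOnWith K z' s) :
    LipschitzOnWith (maxCurvOn s z').toNNReal z' s := by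
  obtain ⟨K, hK⟩ := h
  refine LipschitzOnWith.of_dist_le_mul fun x hx y hy => ?_
  rw [Real.coe_toNNReal _ maxCurvOn_nonneg]
  rcases (dist_nonneg (x := x) (y := y)).eq_or_lt with hd | hd
  · simpa [← hd] using hK.dist_le_mul x hx y hy
  · rw [← div_le_iff₀ hd]
    refine le_csInf ⟨K, K.2, by simpa⟩ fun c hc => (div_le_iff₀ hd).2 ?_
    simpa [Real.coe_toNNReal _ hc.1] using hc.2.dist_le_mul x hx y hy

end MaxCurv

section Velocities

variable {a b : ℝ}

lemma integral_eq_sub_of_admissibleOn (hab : a ≤ b) {p0 u0 p1 u1 : Pt} {z z' : ℝ → Pt}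
    (h : AdmissibleOn a b p0 u0 p1 u1 z z') : ∫ t in a..b, z' t = p1 - p0 := by
  obtain ⟨hderiv, ⟨K, hK⟩, -, hz0, hz1, -⟩ := h
  rw [← hz0, ← hz1]
  refine intervalIntegral.integral_eq_sub_of_hasDeriv_right_of_le hab
    (fun t ht => (hderiv t ht).continuousWithinAt)
    (fun t ht => ((hderiv t (Ioo_subset_Icc_self ht)).hasDerivAt
      (Icc_mem_nhds ht.1 ht.2)).hasDerivWithinAt) ?_
  exact hK.continuousOn.intervalIntegrable_of_Icc hab

lemma lipschitzWith_IccExtend {hab : a ≤ b} {K : ℝ≥0} {F : Icc a b → Pt}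
    (hF : LipschitzWith K F) : LipschitzWith K (IccExtend hab F) := by
  simpa [IccExtend] using hF.comp (LipschitzWith.projIcc hab)

def admissibleVelocities (hab : a ≤ b) (p0 u0 p1 u1 : Pt) (K : ℝ≥0) :
    Set (Icc a b →ᵇ Pt) :=
  {F | LipschitzWith K F ∧ (∀ t, ‖F t‖ = 1) ∧ F ⟨a, left_mem_Icc.2 hab⟩ = u0 ∧
    F ⟨b, right_mem_Icc.2 hab⟩ = u1 ∧ ∫ t in a..b, IccExtend hab F t = p1 - p0}

variable {hab : a ≤ b} {p0 u0 p1 u1 : Pt}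

lemma admissibleVelocities_mono {K K' : ℝ≥0} (hKK' : K ≤ K') :
    admissibleVelocities hab p0 u0 p1 u1 K ⊆ admissibleVelocities hab p0 u0 p1 u1 K' :=
  fun _ ⟨hF, hF'⟩ => ⟨hF.weaken hKK', hF'⟩

lemma isClosed_admissibleVelocities (K : ℝ≥0) :
    IsClosed (admissibleVelocities hab p0 u0 p1 u1 K) := by
  have hint : Continuous fun F : Icc a b →ᵇ Pt => ∫ t in a..b, IccExtend hab F t :=
    intervalIntegral.continuous_parametric_intervalIntegral_of_continuous'
      (f := fun (F : Icc a b →ᵇ Pt) t => IccExtend hab F t) (by fun_prop) a b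
  simp only [admissibleVelocities, lipschitzWith_iff_dist_le_mul, ofPred_and, ofPred_forall]
  refine .inter (isClosed_iInter fun x => isClosed_iInter fun y => isClosed_le ?_ ?_)
    (.inter (isClosed_iInter fun t => isClosed_eq ?_ ?_)
      (.inter (isClosed_eq ?_ ?_) (.inter (isClosed_eq ?_ ?_) (isClosed_eq hint ?_)))) <;>
    fun_prop

lemma isCompact_admissibleVelocities (K : ℝ≥0) :
    IsCompact (admissibleVelocities hab p0 u0 p1 u1 K) :=
  arzela_ascoli₂ (Metric.sphere 0 1) (isCompact_sphere 0 1) _ (isClosed_admissibleVelocities K)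
    (fun _ t hF => mem_sphere_zero_iff_norm.2 (hF.2.1 t))
    (LipschitzWith.uniformEquicontinuous _ K fun F => F.2.1).equicontinuous

lemma admissibleVelocities_nonempty {z z' : ℝ → Pt} {K : ℝ≥0}
    (h : AdmissibleOn a b p0 u0 p1 u1 z z') (hK : LipschitzOnWith K z' (Icc a b)) :
    (admissibleVelocities hab p0 u0 p1 u1 K).Nonempty := by
  have hK' := lipschitzOnWith_iff_restrict.1 hK
  refine ⟨mkOfCompact ⟨_, hK'.continuous⟩, hK', fun t => h.2.2.1 t t.2, h.2.2.2.2.2.1,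
    h.2.2.2.2.2.2, ?_⟩
  rw [← integral_eq_sub_of_admissibleOn hab h]
  refine intervalIntegral.integral_congr fun t ht => ?_
  rw [uIcc_of_le hab] at ht
  exact IccExtend_of_mem hab _ ht

lemma admissibleOn_primitive {K : ℝ≥0} {F : Icc a b →ᵇ Pt}
    (hF : F ∈ admissibleVelocities hab p0 u0 p1 u1 K) :
    AdmissibleOn a b p0 u0 p1 u1 (fun t => p0 + ∫ s in a..t, IccExtend hab F s)
      (IccExtend hab F) := by
  obtain ⟨hlip, hunit, hu0, hu1, hint⟩ := hF
  have hcont : Continuous (IccExtend hab F) := F.continuous.Icc_extend'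
  refine ⟨fun t _ => ((hcont.integral_hasStrictDerivAt a t).hasDerivAt.const_add p0)
    |>.hasDerivWithinAt, ⟨K, (lipschitzWith_IccExtend hlip).lipschitzOnWith⟩,
    fun t ht => ?_, by simp, by simp [hint], ?_, ?_⟩
  · rw [IccExtend_of_mem hab _ ht]; exact hunit _
  · rw [IccExtend_of_mem hab _ (left_mem_Icc.2 hab)]; exact hu0
  · rw [IccExtend_of_mem hab _ (right_mem_Icc.2 hab)]; exact hu1

end Velocities

theorem stmt0_general (z0 v0 zf vf : Pt) (tf : ℝ) (htf : 0 < tf)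
    (hne : ∃ z z' : ℝ → Pt, AdmissibleOn 0 tf z0 v0 zf vf z z') :
    ∃ z z' : ℝ → Pt, AdmissibleOn 0 tf z0 v0 zf vf z z' ∧
      ∀ w w' : ℝ → Pt, AdmissibleOn 0 tf z0 v0 zf vf w w' →
        maxCurvOn (Icc 0 tf) z' ≤ maxCurvOn (Icc 0 tf) w' := by
  set curvatures := maxCurvOn (Icc 0 tf) '' {w' | ∃ w, AdmissibleOn 0 tf z0 v0 zf vf w w'}
  set m := sInf curvatures
  have hcurvatures_nonneg : ∀ c ∈ curvatures, 0 ≤ c :=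
    fun _ ⟨_, _, hc⟩ => hc ▸ maxCurvOn_nonneg
  have hm_le : ∀ w w', AdmissibleOn 0 tf z0 v0 zf vf w w' → m ≤ maxCurvOn (Icc 0 tf) w' :=
    fun w w' hw => csInf_le ⟨0, hcurvatures_nonneg⟩ ⟨w', ⟨w, hw⟩, rfl⟩
  set K : ℕ → ℝ≥0 := fun n => (m + 1 / (n + 1)).toNNReal
  have hK : ∀ n, (K n : ℝ) = m + 1 / (n + 1) := fun n => Real.coe_toNNReal _
    (add_nonneg (Real.sInf_nonneg hcurvatures_nonneg) Nat.one_div_pos_of_nat.le)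
  set A := admissibleVelocities htf.le z0 v0 zf vf
  have hA_nonempty : ∀ n, (A (K n)).Nonempty := fun n => by
    obtain ⟨w0, w0', hw0⟩ := hne
    obtain ⟨_, ⟨w', ⟨w, hw⟩, rfl⟩, hlt⟩ := exists_lt_of_csInf_lt (s := curvatures)
      ⟨_, w0', ⟨w0, hw0⟩, rfl⟩ (lt_add_of_pos_right m (Nat.one_div_pos_of_nat (n := n)))
    exact admissibleVelocities_nonempty hw ((lipschitzOnWith_maxCurvOn hw.2.1).weaken
      (Real.toNNReal_le_toNNReal hlt.le))
  obtain ⟨F, hF⟩ := IsCompact.nonempty_iInter_of_sequence_nonempty_isCompact_isClosed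
    (fun n => A (K n)) (fun n => admissibleVelocities_mono
      (Real.toNNReal_le_toNNReal (add_le_add_right (Nat.one_div_le_one_div n.le_succ) m)))
    hA_nonempty (isCompact_admissibleVelocities _) (fun n => isClosed_admissibleVelocities _)
  rw [mem_iInter] at hF
  refine ⟨_, _, admissibleOn_primitive (hF 0), fun w w' hw => le_trans ?_ (hm_le w w' hw)⟩
  refine ge_of_tendsto' (by simpa using tendsto_one_div_add_atTop_nhds_zero_nat.const_add m)
    fun n => (hK n) ▸ maxCurvOn_le (lipschitzWith_IccExtend (hF n).1).lipschitzOnWith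

/-- Existence of minimisers, Proposition 1 of the paper.
If the set of admissible curves for the data `(z0, v0, zf, vf, t_f)` is nonempty, then
there is an admissible curve whose maximum curvature is least among all admissible
curves for this data: Problem (P) has a minimiser. -/
theorem stmt0 (z0 v0 zf vf : Pt) (tf : ℝ) (htf : 0 < tf)
    (hv0 : ‖v0‖ = 1) (hvf : ‖vf‖ = 1)
    (hne : ∃ z z' : ℝ → Pt, AdmissibleOn 0 tf z0 v0 zf vf z z') :
    ∃ z z' : ℝ → Pt, AdmissibleOn 0 tf z0 v0 zf vf z z' ∧
      ∀ w w' : ℝ → Pt, AdmissibleOn 0 tf z0 v0 zf vf w w' →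
        maxCurvOn (Icc 0 tf) z' ≤ maxCurvOn (Icc 0 tf) w' :=
  stmt0_general z0 v0 zf vf tf htf hne
end
end

section
/- Let z0 = (0,0), zf = (1,0), v0 = vf = (1,0), and t_f = 2. Then there exists δ > 0 such that every admissible curve for the data (z0, v0, zf, vf, 2) has maximum curvature at least δ; that is, the infimum of Problem (P) for this data is strictly positive. (This furnishes a counterexample to the converse of the statement that Markov–Dubins solutions are minimax-curvature solutions, since with any curvature bound a ≥ 0 the minimal length between these oriented endpoints is 1 < 2.) -/
open Set MeasureTheory Real

noncomputable section

/-! A unit tangent that starts at `(1,0)` and turns at rate at most `κ` keeps the curve close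
to the straight line from `z 0`: the first-order Taylor estimate gives
`‖z 2 - z 0 - 2 • z' 0‖ ≤ κ / 2 * 2 ^ 2 = 2 * κ`. For this data the left side is
`‖(-1, 0)‖ = 1`, as the endpoints are at distance `1` while the curve has length `2`;
hence `κ ≥ 1 / 2`. -/

open scoped NNReal

theorem norm_sub_sub_smul_le_of_lipschitzOnWith {E : Type*} [NormedAddCommGroup E]
    [NormedSpace ℝ E] {f f' : ℝ → E} {a b : ℝ} {K : ℝ≥0} (hab : a ≤ b)
    (hf : ∀ t ∈ Icc a b, HasDerivWithinAt f (f' t) (Icc a b) t)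
    (hK : LipschitzOnWith K f' (Icc a b)) :
    ‖f b - f a - (b - a) • f' a‖ ≤ K / 2 * (b - a) ^ 2 := by
  have hg : ∀ t ∈ Icc a b,
      HasDerivWithinAt (fun t ↦ f t - f a - (t - a) • f' a) (f' t - f' a) (Icc a b) t := by
    intro t ht
    have hlin : HasDerivAt (fun t ↦ (t - a) • f' a) (f' a) t := by
      simpa using ((hasDerivAt_id' t).sub_const a).smul_const (f' a)
    exact ((hf t ht).sub_const (f a)).sub hlin.hasDerivWithinAt
  have hB : ∀ t, HasDerivAt (fun t ↦ K / 2 * (t - a) ^ 2) (K * (t - a)) t := by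
    intro t
    exact ((((hasDerivAt_id' t).sub_const a).pow 2).const_mul ((K : ℝ) / 2)).congr_deriv
      (by ring)
  refine image_norm_le_of_norm_deriv_right_le_deriv_boundary
    (fun t ht ↦ (hg t ht).continuousWithinAt)
    (fun t ht ↦ (hg t (Ico_subset_Icc_self ht)).mono_of_mem_nhdsWithin (Icc_mem_nhdsGE_of_mem ht))
    (by simp) hB (fun t ht ↦ ?_) (right_mem_Icc.2 hab)
  have := hK.dist_le_mul t (Ico_subset_Icc_self ht) a (left_mem_Icc.2 hab)
  rwa [dist_eq_norm, Real.dist_eq, abs_of_nonneg (sub_nonneg.2 ht.1)] at this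

theorem le_maxCurvOn {s : Set ℝ} {z' : ℝ → Pt} {c : ℝ} (hz' : ∃ K, LipschitzOnWith K z' s)
    (hc : ∀ K : ℝ≥0, LipschitzOnWith K z' s → c ≤ K) : c ≤ maxCurvOn s z' := by
  obtain ⟨K, hK⟩ := hz'
  refine le_csInf ⟨K, K.coe_nonneg, by rwa [Real.toNNReal_coe]⟩ ?_
  rintro a ⟨ha, hLa⟩
  simpa [Real.coe_toNNReal a ha] using hc _ hLa

theorem norm_pt (x y : ℝ) : ‖pt x y‖ = √(x ^ 2 + y ^ 2) := by
  simp [pt, EuclideanSpace.norm_eq, Fin.sum_univ_two]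

/-- Counterexample to the converse of Theorem `MD&P`.
For the data `z0 = (0,0)`, `zf = (1,0)`, `v0 = vf = (1,0)` and length `t_f = 2`,
the infimum of Problem (P) is strictly positive: there is `δ > 0` such that every
admissible curve for this data has maximum curvature at least `δ`. -/
theorem stmt2 :
    ∃ δ : ℝ, 0 < δ ∧
      ∀ z z' : ℝ → Pt,
        AdmissibleOn 0 2 (pt 0 0) (pt 1 0) (pt 1 0) (pt 1 0) z z' →
          δ ≤ maxCurvOn (Icc 0 2) z' := by
  refine ⟨1 / 2, by norm_num, fun z z' ⟨hz, hz', _, h0, h2, hv0, _⟩ ↦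
    le_maxCurvOn hz' fun K hK ↦ ?_⟩
  have hTaylor := norm_sub_sub_smul_le_of_lipschitzOnWith zero_le_two hz hK
  have hdefect : z 2 - z 0 - (2 - 0 : ℝ) • z' 0 = pt (-1) 0 := by
    rw [h0, h2, hv0]; ext i; fin_cases i <;> norm_num [pt]
  rw [hdefect, norm_pt] at hTaylor
  norm_num at hTaylor
  linarith
end
end

section
/- Let ζ1 < ζ2 be reals, a > 0, and λ1, λ2 ∈ ℝ constants with (λ1, λ2) ≠ (0, 0). Let θ : [ζ1, ζ2] → ℝ be Lipschitz continuous and v : [ζ1, ζ2] → ℝ measurable with θ'(t) = a·v(t) for a.e. t. Let λ3 : [ζ1, ζ2] → ℝ be Lipschitz with λ3'(t) = λ1·sin θ(t) − λ2·cos θ(t) for a.e. t. If λ3(t) = 0 for all t ∈ [ζ1, ζ2], then θ is constant on [ζ1, ζ2] and v(t) = 0 for a.e. t ∈ [ζ1, ζ2]. -/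
open Set MeasureTheory Real

noncomputable section

/-! Wherever `l3` has a derivative on `[ζ1, ζ2]` that derivative is `0`, since `l3` vanishes on
the whole interval, so the continuous function `l1 sin θ - l2 cos θ` vanishes a.e. and hence
everywhere on `[ζ1, ζ2]`. For `(l1, l2) ≠ 0` the zero set of `l1 sin x - l2 cos x` has empty
interior: where it vanishes together with its derivative `l1 cos x + l2 sin x`, both
coefficients vanish. The connected image `θ '' [ζ1, ζ2]` lies in that zero set, so it is a
point, and then `a v = θ' = 0` a.e. -/

theorem HasDerivAt.eq_zero_of_forall_mem_Icc_eq {F : Type*} [NormedAddCommGroup F]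
    [NormedSpace ℝ F] {f : ℝ → F} {f' c : F} {a b t : ℝ} (hab : a < b)
    (hf : HasDerivAt f f' t) (ht : t ∈ Icc a b) (hc : ∀ s ∈ Icc a b, f s = c) : f' = 0 :=
  (uniqueDiffOn_Icc hab t ht).eq_deriv _ hf.hasDerivWithinAt
    ((hasDerivWithinAt_const t _ c).congr hc (hc t ht))

theorem IsPreconnected.subsingleton_of_interior_eq_empty {α : Type*} [LinearOrder α]
    [TopologicalSpace α] [OrderTopology α] [DenselyOrdered α] {s : Set α}
    (hs : IsPreconnected s) (h : interior s = ∅) : s.Subsingleton := by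
  intro x hx y hy
  by_contra hne
  wlog hxy : x < y generalizing x y
  · exact this hy hx (Ne.symm hne) ((Ne.symm hne).lt_of_le (not_lt.mp hxy))
  obtain ⟨z, hz⟩ := nonempty_Ioo.mpr hxy
  have hIoo : Ioo x y ⊆ interior s :=
    interior_maximal (Ioo_subset_Icc_self.trans (hs.Icc_subset hx hy)) isOpen_Ioo
  simpa [h] using hIoo hz

theorem interior_setOf_mul_sin_sub_mul_cos_eq_zero {l1 l2 : ℝ} (hl : (l1, l2) ≠ (0, 0)) :
    interior {x : ℝ | l1 * sin x - l2 * cos x = 0} = ∅ := by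
  refine eq_empty_iff_forall_notMem.mpr fun x hx => hl ?_
  have hzero : (fun y => l1 * sin y - l2 * cos y) =ᶠ[nhds x] fun _ => 0 :=
    mem_interior_iff_mem_nhds.mp hx
  have hderiv : HasDerivAt (fun y => l1 * sin y - l2 * cos y)
      (l1 * cos x - l2 * -sin x) x :=
    ((hasDerivAt_sin x).const_mul l1).sub ((hasDerivAt_cos x).const_mul l2)
  have hA : l1 * sin x - l2 * cos x = 0 := hzero.eq_of_nhds
  have hB : l1 * cos x - l2 * -sin x = 0 :=
    hderiv.unique ((hasDerivAt_const x 0).congr_of_eventuallyEq hzero)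
  have hsc := sin_sq_add_cos_sq x
  have h1 : l1 = 0 := by linear_combination sin x * hA + cos x * hB - l1 * hsc
  have h2 : l2 = 0 := by linear_combination -cos x * hA + sin x * hB - l2 * hsc
  rw [h1, h2]

theorem stmt4_general (ζ1 ζ2 a l1 l2 : ℝ) (hζ : ζ1 < ζ2) (ha : 0 < a)
    (hl : (l1, l2) ≠ (0, 0))
    (θ v l3 : ℝ → ℝ)
    (hθlip : ∃ K : NNReal, LipschitzOnWith K θ (Icc ζ1 ζ2))
    (hθ' : ∀ᵐ t ∂volume, t ∈ Icc ζ1 ζ2 → HasDerivAt θ (a * v t) t)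
    (hl3' : ∀ᵐ t ∂volume, t ∈ Icc ζ1 ζ2 →
      HasDerivAt l3 (l1 * Real.sin (θ t) - l2 * Real.cos (θ t)) t)
    (hl30 : ∀ t ∈ Icc ζ1 ζ2, l3 t = 0) :
    (∀ s ∈ Icc ζ1 ζ2, ∀ t ∈ Icc ζ1 ζ2, θ s = θ t) ∧
      (∀ᵐ t ∂volume, t ∈ Icc ζ1 ζ2 → v t = 0) := by
  obtain ⟨K, hK⟩ := hθlip
  have hθc : ContinuousOn θ (Icc ζ1 ζ2) := hK.continuousOn
  have hzero_ae : (fun t => l1 * sin (θ t) - l2 * cos (θ t))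
      =ᵐ[volume.restrict (Icc ζ1 ζ2)] fun _ => 0 := by
    refine (ae_restrict_iff' measurableSet_Icc).mpr ?_
    filter_upwards [hl3'] with t ht htI
    exact (ht htI).eq_zero_of_forall_mem_Icc_eq hζ htI hl30
  have hzero : ∀ t ∈ Icc ζ1 ζ2, l1 * sin (θ t) - l2 * cos (θ t) = 0 :=
    fun t ht => Measure.eqOn_Icc_of_ae_eq volume hζ.ne hzero_ae (by fun_prop)
      continuousOn_const ht
  have hconst : ∀ s ∈ Icc ζ1 ζ2, ∀ t ∈ Icc ζ1 ζ2, θ s = θ t := by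
    have himage : θ '' Icc ζ1 ζ2 ⊆ {x | l1 * sin x - l2 * cos x = 0} := by
      rintro _ ⟨t, ht, rfl⟩
      exact hzero t ht
    have hsub := (isPreconnected_Icc.image θ hθc).subsingleton_of_interior_eq_empty
      (subset_empty_iff.mp <|
        (interior_mono himage).trans (interior_setOf_mul_sin_sub_mul_cos_eq_zero hl).subset)
    exact fun s hs t ht => hsub (mem_image_of_mem θ hs) (mem_image_of_mem θ ht)
  refine ⟨hconst, ?_⟩
  filter_upwards [hθ'] with t ht htI
  have hav : a * v t = 0 := (ht htI).eq_zero_of_forall_mem_Icc_eq hζ htI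
    fun s hs => hconst s hs ζ1 (left_mem_Icc.mpr hζ.le)
  exact (mul_eq_zero.mp hav).resolve_left ha.ne'

/-- Lemma 1 of the paper: singularity and straight line segments.
If the switching function `l3` vanishes identically on `[ζ1, ζ2]`, then the tangent
angle `θ` is constant on `[ζ1, ζ2]` and (since `a > 0`) the control `v` vanishes a.e.
there. -/
theorem stmt4 (ζ1 ζ2 a l1 l2 : ℝ) (hζ : ζ1 < ζ2) (ha : 0 < a)
    (hl : (l1, l2) ≠ (0, 0))
    (θ v l3 : ℝ → ℝ)
    (hθlip : ∃ K : NNReal, LipschitzOnWith K θ (Icc ζ1 ζ2))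
    (hvmeas : Measurable v)
    (hθ' : ∀ᵐ t ∂volume, t ∈ Icc ζ1 ζ2 → HasDerivAt θ (a * v t) t)
    (hl3lip : ∃ K : NNReal, LipschitzOnWith K l3 (Icc ζ1 ζ2))
    (hl3' : ∀ᵐ t ∂volume, t ∈ Icc ζ1 ζ2 →
      HasDerivAt l3 (l1 * Real.sin (θ t) - l2 * Real.cos (θ t)) t)
    (hl30 : ∀ t ∈ Icc ζ1 ζ2, l3 t = 0) :
    (∀ s ∈ Icc ζ1 ζ2, ∀ t ∈ Icc ζ1 ζ2, θ s = θ t) ∧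
      (∀ᵐ t ∂volume, t ∈ Icc ζ1 ζ2 → v t = 0) :=
  stmt4_general ζ1 ζ2 a l1 l2 hζ ha hl θ v l3 hθlip hθ' hl3' hl30
end
end

section
/- Let t_f > 0 and a > 0. Suppose θ : [0, t_f] → ℝ is Lipschitz and v : [0, t_f] → ℝ is measurable with |v(t)| ≤ 1 and θ'(t) = a·v(t) for a.e. t, and v is not a.e. equal to zero. Suppose λ0 ≥ 0 and λ1, λ2 ∈ ℝ are constants, and λ3, λ4 : [0, t_f] → ℝ are Lipschitz with, for a.e. t: λ3'(t) = λ1·sin θ(t) − λ2·cos θ(t), λ4'(t) = −λ0 − λ3(t)·v(t), and v(t) = −sgn(λ3(t)) whenever λ3(t) ≠ 0; suppose λ4(0) = λ4(t_f) = 0 and the nontriviality condition (λ0, λ1, λ2, λ3(t), λ4(t)) ≠ (0,0,0,0,0) holds for every t ∈ [0, t_f]. Then λ0 > 0 (the problem is normal). -/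
open Set MeasureTheory Real

noncomputable section

-- FTC-type lower bound for Lipschitz functions with an a.e. derivative.
lemma lip_deriv_lb {f g : ℝ → ℝ} {K : NNReal} (hf : LipschitzWith K f)
    {a b c : ℝ} (hab : a ≤ b) (hc : 0 ≤ c)
    (hg : ∀ᵐ t ∂volume, t ∈ Ioo a b → HasDerivAt f (g t) t ∧ c ≤ g t) :
    c * (b - a) ≤ f b - f a := by
  set h : ℝ → ℝ := fun t => f t + K * t with hh_def
  have hmono : Monotone h := by
    intro x y hxy
    have hd := hf.dist_le_mul x y
    rw [Real.dist_eq, Real.dist_eq] at hd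
    have h2 : f x - f y ≤ |f x - f y| := le_abs_self _
    have h3 : |x - y| = y - x := by rw [abs_sub_comm]; exact abs_of_nonneg (by linarith)
    rw [h3] at hd
    simp only [hh_def]
    nlinarith [abs_sub_comm (f x) (f y)]
  set μ := hmono.stieltjesFunction.measure with hμdef
  have hS : ∀ x, hmono.stieltjesFunction x = h x := by
    intro x
    rw [hmono.stieltjesFunction_eq]
    refine hmono.continuousWithinAt_Ioi_iff_rightLim_eq.mp ?_
    have : Continuous h := by
      have := hf.continuous
      continuity
    exact this.continuousWithinAt
  have hμIoc : μ (Ioc a b) = ENNReal.ofReal (h b - h a) := by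
    rw [hμdef, StieltjesFunction.measure_Ioc, hS, hS]
  have hD := hmono.ae_hasDerivAt
  have hlt := Measure.rnDeriv_lt_top hmono.stieltjesFunction.measure volume
  have hae : ∀ᵐ t ∂volume, t ∈ Ioo a b →
      ENNReal.ofReal (c + K) ≤ Measure.rnDeriv μ volume t := by
    filter_upwards [hD, hlt, hg] with t ht hlt' hgt htmem
    have h1 : HasDerivAt h (g t + K * 1) t :=
      (hgt htmem).1.add ((hasDerivAt_id t).const_mul (K : ℝ))
    rw [mul_one] at h1
    have heq : (Measure.rnDeriv μ volume t).toReal = g t + K := h1.unique ht ▸ rfl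
    have heq2 : Measure.rnDeriv μ volume t = ENNReal.ofReal (g t + K) := by
      rw [← heq, ENNReal.ofReal_toReal hlt'.ne]
    rw [heq2]
    exact ENNReal.ofReal_le_ofReal (by linarith [(hgt htmem).2])
  have hb_ne : ∀ᵐ (t : ℝ) ∂volume, t ≠ b := by
    rw [ae_iff]
    simpa using measure_singleton b
  have hint : ENNReal.ofReal (c + K) * volume (Ioc a b) ≤ μ (Ioc a b) := by
    have step1 : ENNReal.ofReal (c + K) * volume (Ioc a b)
        = ∫⁻ _ in Ioc a b, ENNReal.ofReal (c + K) ∂volume := by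
      rw [setLIntegral_const, mul_comm]
    have step2 : (∫⁻ t in Ioc a b, ENNReal.ofReal (c + K) ∂volume)
        ≤ ∫⁻ t in Ioc a b, Measure.rnDeriv μ volume t ∂volume := by
      apply lintegral_mono_ae
      rw [ae_restrict_iff' measurableSet_Ioc]
      filter_upwards [hae, hb_ne] with t hae' hbne htmem
      exact hae' ⟨htmem.1, lt_of_le_of_ne htmem.2 hbne⟩
    have step3 : (∫⁻ t in Ioc a b, Measure.rnDeriv μ volume t ∂volume) ≤ μ (Ioc a b) := by
      rw [← withDensity_apply _ measurableSet_Ioc]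
      exact Measure.withDensity_rnDeriv_le μ volume (Ioc a b)
    calc ENNReal.ofReal (c + K) * volume (Ioc a b) = _ := step1
      _ ≤ _ := step2
      _ ≤ _ := step3
  rw [hμIoc, Real.volume_Ioc, ← ENNReal.ofReal_mul (by positivity)] at hint
  have hfinal : (c + K) * (b - a) ≤ h b - h a := by
    have hh : 0 ≤ h b - h a := sub_nonneg.mpr (hmono hab)
    exact (ENNReal.ofReal_le_ofReal_iff hh).mp hint
  simp only [hh_def] at hfinal
  nlinarith


/-- Lemma 2 of the paper: normality of solutions.
Under the conditions supplied by the maximum principle for Problem (OC) — with `a > 0`,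
a control `v` not a.e. zero, adjoint equations, the bang–bang law `v = -sign l3` off the
zero set of `l3`, the boundary conditions `l4 0 = l4 tf = 0`, and nontriviality of the
multipliers — the cost multiplier `l0` is strictly positive. -/

theorem stmt5 (tf a : ℝ) (htf : 0 < tf) (ha : 0 < a)
    (θ v : ℝ → ℝ) (l0 l1 l2 : ℝ) (l3 l4 : ℝ → ℝ)
    (hl0 : 0 ≤ l0)
    (hθlip : ∃ K : NNReal, LipschitzOnWith K θ (Icc 0 tf))
    (hvmeas : Measurable v)
    (hvbd : ∀ᵐ t ∂volume, t ∈ Icc (0:ℝ) tf → |v t| ≤ 1)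
    (hθ' : ∀ᵐ t ∂volume, t ∈ Icc (0:ℝ) tf → HasDerivAt θ (a * v t) t)
    (hvne : ¬ ∀ᵐ t ∂volume, t ∈ Icc (0:ℝ) tf → v t = 0)
    (hl3lip : ∃ K : NNReal, LipschitzOnWith K l3 (Icc 0 tf))
    (hl4lip : ∃ K : NNReal, LipschitzOnWith K l4 (Icc 0 tf))
    (hl3' : ∀ᵐ t ∂volume, t ∈ Icc (0:ℝ) tf →
      HasDerivAt l3 (l1 * Real.sin (θ t) - l2 * Real.cos (θ t)) t)
    (hl4' : ∀ᵐ t ∂volume, t ∈ Icc (0:ℝ) tf →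
      HasDerivAt l4 (-l0 - l3 t * v t) t)
    (hsgn : ∀ᵐ t ∂volume, t ∈ Icc (0:ℝ) tf → l3 t ≠ 0 → v t = -Real.sign (l3 t))
    (hl40 : l4 0 = 0) (hl4f : l4 tf = 0)
    (hnontriv : ∀ t ∈ Icc (0:ℝ) tf,
      ¬ (l0 = 0 ∧ l1 = 0 ∧ l2 = 0 ∧ l3 t = 0 ∧ l4 t = 0)) :
    0 < l0 := by
  by_contra hcon
  have hl00 : l0 = 0 := le_antisymm (not_lt.mp hcon) hl0
  clear hcon hl0
  -- extend l4 to a globally Lipschitz function F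
  obtain ⟨K4, hK4⟩ := hl4lip
  obtain ⟨F, hFlip, hFeq⟩ := hK4.extend_real
  have hF0 : F 0 = 0 := by rw [← hFeq (left_mem_Icc.mpr htf.le), hl40]
  have hFf : F tf = 0 := by rw [← hFeq (right_mem_Icc.mpr htf.le), hl4f]
  -- a.e. derivative of F on Ioo 0 tf is |l3|
  have hFder : ∀ᵐ t ∂volume, t ∈ Ioo (0:ℝ) tf → HasDerivAt F (|l3 t|) t := by
    filter_upwards [hl4', hsgn] with t h4 hs ht
    have htIcc : t ∈ Icc (0:ℝ) tf := Ioo_subset_Icc_self ht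
    have hd : HasDerivAt l4 (|l3 t|) t := by
      have hthis := h4 htIcc
      rw [hl00] at hthis
      rcases eq_or_ne (l3 t) 0 with h0 | h0
      · simpa [h0] using hthis
      · have hv := hs htIcc h0
        have heq : -0 - l3 t * v t = |l3 t| := by
          rw [hv]
          rcases lt_or_gt_of_ne h0 with hneg | hpos
          · rw [Real.sign_of_neg hneg, abs_of_neg hneg]; ring
          · rw [Real.sign_of_pos hpos, abs_of_pos hpos]; ring
        rw [← heq]; exact hthis
    have hFev : F =ᶠ[nhds t] l4 :=
      Filter.eventually_of_mem (Icc_mem_nhds ht.1 ht.2) (fun x hx => (hFeq hx).symm)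
    exact hd.congr_of_eventuallyEq hFev
  -- Step (i): l3 vanishes on [0, tf]
  have hl3zero : ∀ t ∈ Icc (0:ℝ) tf, l3 t = 0 := by
    by_contra hcon
    push_neg at hcon
    obtain ⟨t0, ht0, hne⟩ := hcon
    obtain ⟨K3, hK3⟩ := hl3lip
    have hl3c : ContinuousOn l3 (Icc 0 tf) := hK3.continuousOn
    set ε := |l3 t0| / 2 with hεdef
    have hε : 0 < ε := by positivity
    obtain ⟨δ, hδ, hδ'⟩ := Metric.continuousWithinAt_iff.mp (hl3c t0 ht0) ε hε
    set c := max 0 (t0 - δ/2) with hcdef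
    set d := min tf (t0 + δ/2) with hddef
    have hcd : c < d := by
      apply max_lt <;> apply lt_min
      · exact htf
      · linarith [ht0.1]
      · linarith [ht0.2]
      · linarith
    have hc0 : 0 ≤ c := le_max_left _ _
    have hdtf : d ≤ tf := min_le_left _ _
    have hcIcc : c ∈ Icc (0:ℝ) tf := ⟨hc0, hcd.le.trans hdtf⟩
    have hdIcc : d ∈ Icc (0:ℝ) tf := ⟨hc0.trans hcd.le, hdtf⟩
    have hbig : ∀ t ∈ Icc c d, ε ≤ |l3 t| := by
      intro t ht
      have htIcc : t ∈ Icc (0:ℝ) tf := ⟨hc0.trans ht.1, ht.2.trans hdtf⟩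
      have h1 : dist t t0 < δ := by
        rw [Real.dist_eq, abs_lt]
        constructor
        · have := ht.1; simp only [hcdef] at this
          have := le_max_right 0 (t0 - δ/2)
          linarith [ht.1, le_max_right 0 (t0 - δ/2)]
        · have h2 : t ≤ t0 + δ/2 := ht.2.trans (min_le_right _ _)
          linarith
      have h2 := hδ' htIcc h1
      rw [Real.dist_eq] at h2
      have h3 := abs_sub_abs_le_abs_sub (l3 t0) (l3 t)
      rw [abs_sub_comm] at h2
      simp only [hεdef] at *
      linarith [abs_nonneg (l3 t)]
    -- apply the key lemma three times
    have A1 : (0:ℝ) * (c - 0) ≤ F c - F 0 := by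
      refine lip_deriv_lb (g := fun t => |l3 t|) hFlip hc0 le_rfl ?_
      filter_upwards [hFder] with t h ht
      exact ⟨h ⟨ht.1, ht.2.trans_le (hcd.le.trans hdtf)⟩, abs_nonneg _⟩
    have A2 : (0:ℝ) * (tf - d) ≤ F tf - F d := by
      refine lip_deriv_lb (g := fun t => |l3 t|) hFlip hdtf le_rfl ?_
      filter_upwards [hFder] with t h ht
      exact ⟨h ⟨lt_of_le_of_lt (hc0.trans hcd.le) ht.1, ht.2⟩, abs_nonneg _⟩
    have A3 : ε * (d - c) ≤ F d - F c := by
      refine lip_deriv_lb (g := fun t => |l3 t|) hFlip hcd.le hε.le ?_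
      filter_upwards [hFder] with t h ht
      have htIoo : t ∈ Ioo (0:ℝ) tf :=
        ⟨lt_of_le_of_lt hc0 ht.1, lt_of_lt_of_le ht.2 hdtf⟩
      exact ⟨h htIoo, hbig t (Ioo_subset_Icc_self ht)⟩
    rw [hF0] at A1
    rw [hFf] at A2
    nlinarith
  -- Case l1 = l2 = 0 : contradiction with nontriviality at 0
  by_cases h12 : l1 = 0 ∧ l2 = 0
  · exact hnontriv 0 (left_mem_Icc.mpr htf.le)
      ⟨hl00, h12.1, h12.2, hl3zero 0 (left_mem_Icc.mpr htf.le), hl40⟩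
  -- Otherwise : derive v = 0 a.e., contradicting hvne
  have hl3der0 : ∀ᵐ t ∂volume, t ∈ Ioo (0:ℝ) tf →
      l1 * Real.sin (θ t) - l2 * Real.cos (θ t) = 0 := by
    filter_upwards [hl3'] with t h3 ht
    have hzero : l3 =ᶠ[nhds t] fun _ => (0:ℝ) :=
      Filter.eventually_of_mem (Icc_mem_nhds ht.1 ht.2) (fun x hx => hl3zero x hx)
    have h0 : HasDerivAt l3 0 t :=
      (hasDerivAt_const t (0:ℝ)).congr_of_eventuallyEq hzero
    exact (h3 (Ioo_subset_Icc_self ht)).unique h0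
  obtain ⟨Kθ, hKθ⟩ := hθlip
  have hθc : ContinuousOn θ (Icc 0 tf) := hKθ.continuousOn
  -- the a.e. identity holds everywhere on Ioo by continuity
  have hφ0 : ∀ t ∈ Ioo (0:ℝ) tf, l1 * Real.sin (θ t) - l2 * Real.cos (θ t) = 0 := by
    by_contra hcon
    push_neg at hcon
    obtain ⟨t1, ht1, hne⟩ := hcon
    have hθct : ContinuousAt θ t1 := hθc.continuousAt (Icc_mem_nhds ht1.1 ht1.2)
    have hφct : ContinuousAt (fun t => l1 * Real.sin (θ t) - l2 * Real.cos (θ t)) t1 := by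
      exact ((continuousAt_const.mul (Real.continuous_sin.continuousAt.comp hθct)).sub
        (continuousAt_const.mul (Real.continuous_cos.continuousAt.comp hθct)))
    have hev : ∀ᶠ x in nhds t1,
        l1 * Real.sin (θ x) - l2 * Real.cos (θ x) ≠ 0 := hφct.eventually_ne hne
    have hmem : {x | l1 * Real.sin (θ x) - l2 * Real.cos (θ x) ≠ 0} ∩ Ioo 0 tf ∈ nhds t1 :=
      Filter.inter_mem hev (isOpen_Ioo.mem_nhds ht1)
    obtain ⟨δ, hδ, hball⟩ := Metric.mem_nhds_iff.mp hmem
    have hnull : volume {t : ℝ | ¬ (t ∈ Ioo (0:ℝ) tf →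
        l1 * Real.sin (θ t) - l2 * Real.cos (θ t) = 0)} = 0 := hl3der0
    have hsub : Metric.ball t1 δ ⊆ {t : ℝ | ¬ (t ∈ Ioo (0:ℝ) tf →
        l1 * Real.sin (θ t) - l2 * Real.cos (θ t) = 0)} := by
      intro x hx
      have := hball hx
      simp only [mem_inter_iff, mem_setOf_eq] at this
      simp only [mem_setOf_eq]
      push_neg
      exact ⟨this.2, this.1⟩
    have := measure_mono_null hsub hnull
    rw [Real.volume_ball] at this
    rw [ENNReal.ofReal_eq_zero] at this
    linarith
  -- conclude v = 0 a.e.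
  have hv0 : ∀ᵐ t ∂volume, t ∈ Icc (0:ℝ) tf → v t = 0 := by
    have hends : ∀ᵐ (t : ℝ) ∂volume, t ∉ ({0, tf} : Set ℝ) := by
      have hset : {t : ℝ | ¬ t ∉ ({0, tf} : Set ℝ)} = {0, tf} := by
        ext x; simp; tauto
      rw [ae_iff, hset]
      exact ((Set.finite_singleton tf).insert 0).countable.measure_zero _
    filter_upwards [hθ', hends] with t hθt hnotend ht
    have htIoo : t ∈ Ioo (0:ℝ) tf := by
      constructor
      · rcases lt_or_eq_of_le ht.1 with h | h
        · exact h
        · exact absurd (by simp [← h] : t ∈ ({0, tf} : Set ℝ)) hnotend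
      · rcases lt_or_eq_of_le ht.2 with h | h
        · exact h
        · exact absurd (by simp [h] : t ∈ ({0, tf} : Set ℝ)) hnotend
    have hθd := hθt ht
    have hsin := (Real.hasDerivAt_sin (θ t)).comp t hθd
    have hcos := (Real.hasDerivAt_cos (θ t)).comp t hθd
    have hd1 : HasDerivAt (fun s => l1 * Real.sin (θ s) - l2 * Real.cos (θ s))
        (l1 * (Real.cos (θ t) * (a * v t)) - l2 * (-Real.sin (θ t) * (a * v t))) t :=
      (hsin.const_mul l1).sub (hcos.const_mul l2)
    have hd0 : HasDerivAt (fun s => l1 * Real.sin (θ s) - l2 * Real.cos (θ s)) 0 t := by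
      have hev : (fun s => l1 * Real.sin (θ s) - l2 * Real.cos (θ s)) =ᶠ[nhds t]
          fun _ => (0:ℝ) :=
        Filter.eventually_of_mem (isOpen_Ioo.mem_nhds htIoo) (fun x hx => hφ0 x hx)
      exact (hasDerivAt_const t (0:ℝ)).congr_of_eventuallyEq hev
    have heq := hd1.unique hd0
    have hφt := hφ0 t htIoo
    by_contra hvne0
    have hav : a * v t ≠ 0 := mul_ne_zero ha.ne' hvne0
    have hfac : l1 * Real.cos (θ t) + l2 * Real.sin (θ t) = 0 := by
      have h1 : (l1 * Real.cos (θ t) + l2 * Real.sin (θ t)) * (a * v t) = 0 := by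
        rw [← heq]; ring
      rcases mul_eq_zero.mp h1 with h | h
      · exact h
      · exact absurd h hav
    have hpy := Real.sin_sq_add_cos_sq (θ t)
    have hl1 : l1 = 0 := by
      linear_combination Real.sin (θ t) * hφt + Real.cos (θ t) * hfac - l1 * hpy
    have hl2 : l2 = 0 := by
      linear_combination (- Real.cos (θ t)) * hφt + Real.sin (θ t) * hfac - l2 * hpy
    exact h12 ⟨hl1, hl2⟩
  exact hvne hv0
end
end

section
/- Let t_f > 0 and a > 0. Suppose θ : [0, t_f] → ℝ is Lipschitz, v : [0, t_f] → ℝ is measurable with |v(t)| ≤ 1 and θ'(t) = a·v(t) a.e., λ1, λ2 ∈ ℝ are constants, and λ3, λ4 : [0, t_f] → ℝ are Lipschitz with, for a.e. t: λ3'(t) = λ1·sin θ(t) − λ2·cos θ(t) and λ4'(t) = −1 − λ3(t)·v(t), with λ4(0) = λ4(t_f) = 0. Suppose there is a constant h ∈ ℝ with a + λ1·cos θ(t) + λ2·sin θ(t) + a·λ3(t)·v(t) = h for a.e. t (constancy of the Hamiltonian, with λ0 = 1), and suppose there is a nondegenerate subinterval [ζ1, ζ2] ⊆ [0, t_f] on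 which λ3 vanishes identically (the control is singular there). Then ρ := √(λ1² + λ2²) satisfies ρ = |a − h| and ρ ≠ 0. -/
open Set MeasureTheory Real

noncomputable section

open Filter Topology in

/-- A.e. FTC inequality for Lipschitz functions: if `g` is Lipschitz on `[a,b]` and has,
almost everywhere on `[a,b)`, a derivative bounded above by `c`, then
`g b - g a ≤ c * (b - a)`. -/
lemma lipschitzOn_sub_le_of_ae_deriv_le (K : NNReal) (g : ℝ → ℝ) {a b : ℝ} (c : ℝ)
    (hab : a ≤ b) (hg : LipschitzOnWith K g (Icc a b))
    (hd : ∀ᵐ t ∂volume, t ∈ Ico a b → ∃ d : ℝ, HasDerivAt g d t ∧ d ≤ c) :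
    g b - g a ≤ c * (b - a) := by
  have hba : (0:ℝ) ≤ b - a := sub_nonneg.2 hab
  set C : ℝ := (K : ℝ) + |c| with hC
  have hC0 : 0 ≤ C := by positivity
  refine le_of_forall_pos_le_add fun ε' hε' => ?_
  set ε : ℝ := ε' / ((b - a) + C + 1) with hεdef
  have hεpos : 0 < ε := div_pos hε' (by positivity)
  -- the null exceptional set and an open set of small measure containing it
  set S : Set ℝ := {t | ¬ (t ∈ Ico a b → ∃ d : ℝ, HasDerivAt g d t ∧ d ≤ c)} with hSdef
  have hS : volume S = 0 := hd
  obtain ⟨U, hSU, hUopen, hUvol⟩ := Set.exists_isOpen_lt_of_lt S (ENNReal.ofReal ε)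
    (by rw [hS]; exact ENNReal.ofReal_pos.2 hεpos)
  have hUfin : volume U ≠ ⊤ := (hUvol.trans ENNReal.ofReal_lt_top).ne
  set m : ℝ → ℝ := fun t => (volume (U ∩ Icc a t)).toReal with hm
  have hfin : ∀ t, volume (U ∩ Icc a t) ≠ ⊤ := fun t =>
    ne_top_of_le_ne_top hUfin (measure_mono Set.inter_subset_left)
  have hmono : ∀ {t u : ℝ}, t ≤ u → m t ≤ m u := fun {t u} htu =>
    ENNReal.toReal_mono (hfin u)
      (measure_mono (inter_subset_inter_right _ (Icc_subset_Icc_right htu)))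
  have hgrow : ∀ {t u : ℝ}, t ≤ u → m u - m t ≤ u - t := by
    intro t u htu
    have hsub : U ∩ Icc a u ⊆ (U ∩ Icc a t) ∪ Ioc t u := by
      rintro x ⟨hxU, hxa, hxu⟩
      rcases le_or_gt x t with hx | hx
      · exact Or.inl ⟨hxU, hxa, hx⟩
      · exact Or.inr ⟨hx, hxu⟩
    have h1 : volume (U ∩ Icc a u) ≤ volume (U ∩ Icc a t) + volume (Ioc t u) :=
      (measure_mono hsub).trans (measure_union_le _ _)
    have hIocfin : volume (Ioc t u) ≠ ⊤ := by rw [Real.volume_Ioc]; exact ENNReal.ofReal_ne_top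
    have h2 := ENNReal.toReal_mono (ENNReal.add_ne_top.2 ⟨hfin t, hIocfin⟩) h1
    rw [ENNReal.toReal_add (hfin t) hIocfin, Real.volume_Ioc,
      ENNReal.toReal_ofReal (sub_nonneg.2 htu)] at h2
    have : m u ≤ m t + (u - t) := h2
    linarith
  have hmcont : Continuous m := by
    refine (LipschitzWith.of_dist_le_mul (K := 1) fun t u => ?_).continuous
    rw [NNReal.coe_one, one_mul, Real.dist_eq, Real.dist_eq]
    rcases le_total t u with h | h
    · have h1 := hmono h; have h2 := hgrow h
      rw [abs_sub_comm (m t), abs_of_nonneg (by linarith), abs_sub_comm t,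
        abs_of_nonneg (by linarith)]
      linarith
    · have h1 := hmono h; have h2 := hgrow h
      rw [abs_of_nonneg (by linarith), abs_of_nonneg (by linarith)]
      linarith
  have hma : m a = 0 := by
    have h0 : volume (U ∩ Icc a a) = 0 :=
      measure_mono_null Set.inter_subset_right (by simp [Icc_self])
    simp only [hm, h0, ENNReal.toReal_zero]
  -- real induction
  set s : Set ℝ := {t | g t - g a ≤ (c + ε) * (t - a) + C * m t} with hsdef
  have hclosed : IsClosed (s ∩ Icc a b) := by
    have hcont : ContinuousOn (fun t => ((c + ε) * (t - a) + C * m t) - (g t - g a)) (Icc a b) := by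
      apply ContinuousOn.sub
      · exact Continuous.continuousOn (by fun_prop)
      · exact hg.continuousOn.sub continuousOn_const
    have heq : s ∩ Icc a b =
        Icc a b ∩ (fun t => ((c + ε) * (t - a) + C * m t) - (g t - g a)) ⁻¹' (Ici 0) := by
      ext t
      constructor
      · rintro ⟨h1, h2⟩
        simp only [hsdef, mem_setOf_eq] at h1
        exact ⟨h2, by simp only [mem_preimage, mem_Ici]; linarith⟩
      · rintro ⟨h2, h1⟩
        refine ⟨?_, h2⟩
        simp only [mem_preimage, mem_Ici] at h1
        simp only [hsdef, mem_setOf_eq]; linarith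
    rw [heq]
    exact hcont.preimage_isClosed_of_isClosed isClosed_Icc isClosed_Ici
  have has : a ∈ s := by simp [hsdef, hma]
  have hstep : ∀ x ∈ s ∩ Ico a b, ∀ y ∈ Ioi x, (s ∩ Ioc x y).Nonempty := by
    rintro x ⟨hxs, hxa, hxb⟩ y hxy
    have hxs' : g x - g a ≤ (c + ε) * (x - a) + C * m x := hxs
    by_cases hxU : x ∈ U
    · obtain ⟨δ, hδpos, hball⟩ := Metric.isOpen_iff.1 hUopen x hxU
      set u : ℝ := min (min y b) (x + δ / 2) with hu
      have hxu : x < u := lt_min (lt_min hxy hxb) (by linarith)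
      have hub : u ≤ b := le_trans (min_le_left _ _) (min_le_right _ _)
      have huy : u ≤ y := le_trans (min_le_left _ _) (min_le_left _ _)
      have hIccU : Icc x u ⊆ U := by
        intro z hz
        apply hball
        rw [Metric.mem_ball, Real.dist_eq, abs_of_nonneg (sub_nonneg.2 hz.1)]
        have hud : u ≤ x + δ / 2 := min_le_right _ _
        have := hz.2
        linarith
      have hmincr : u - x ≤ m u - m x := by
        have hdisj : Disjoint (U ∩ Icc a x) (Ioc x u) := by
          rw [Set.disjoint_left]
          rintro z ⟨_, _, hzx⟩ ⟨hz1, _⟩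
          exact absurd hzx (not_le.2 hz1)
        have hsub : (U ∩ Icc a x) ∪ Ioc x u ⊆ U ∩ Icc a u := by
          rintro z (⟨h1, h2, h3⟩ | ⟨h1, h2⟩)
          · exact ⟨h1, h2, h3.trans hxu.le⟩
          · exact ⟨hIccU ⟨h1.le, h2⟩, hxa.trans h1.le, h2⟩
        have h1 : volume ((U ∩ Icc a x) ∪ Ioc x u) ≤ volume (U ∩ Icc a u) :=
          measure_mono hsub
        rw [measure_union hdisj measurableSet_Ioc] at h1
        have hIocfin : volume (Ioc x u) ≠ ⊤ := by rw [Real.volume_Ioc]; exact ENNReal.ofReal_ne_top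
        have h2 := ENNReal.toReal_mono (hfin u) h1
        rw [ENNReal.toReal_add (hfin x) hIocfin, Real.volume_Ioc,
          ENNReal.toReal_ofReal (by linarith : (0:ℝ) ≤ u - x)] at h2
        have : m x + (u - x) ≤ m u := h2
        linarith
      refine ⟨u, ?_, hxu, huy⟩
      have hglip : g u - g x ≤ (K : ℝ) * (u - x) := by
        have hd := hg.dist_le_mul u ⟨by linarith, hub⟩ x ⟨hxa, hxb.le⟩
        rw [Real.dist_eq, Real.dist_eq, abs_of_nonneg (by linarith : (0:ℝ) ≤ u - x)] at hd
        calc g u - g x ≤ |g u - g x| := le_abs_self _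
          _ ≤ (K : ℝ) * (u - x) := hd
      have e1 : C * (u - x) ≤ C * (m u - m x) := mul_le_mul_of_nonneg_left hmincr hC0
      have e2 : (0:ℝ) ≤ (ε + (c + |c|)) * (u - x) :=
        mul_nonneg (by linarith [neg_abs_le c]) (by linarith)
      show g u - g a ≤ (c + ε) * (u - a) + C * m u
      have hexp : (c + ε) * (u - a) = (c + ε) * (x - a) + (c + ε) * (u - x) := by ring
      rw [hexp]
      have hid : (c + ε) * (u - x) + C * (u - x) - (K : ℝ) * (u - x)
          = (ε + (c + |c|)) * (u - x) := by rw [hC]; ring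
      linarith [hglip, hxs', e1, e2, hid]
    · have hxS : x ∉ S := fun hxSmem => hxU (hSU hxSmem)
      have hprop : ∃ d : ℝ, HasDerivAt g d x ∧ d ≤ c := by
        by_contra hcon
        refine hxS ?_
        simp only [hSdef, mem_setOf_eq]
        intro himp
        exact hcon (himp ⟨hxa, hxb⟩)
      obtain ⟨d, hder, hdc⟩ := hprop
      have hslope : Tendsto (slope g x) (𝓝[Ioi x \ {x}] x) (𝓝 d) :=
        hasDerivWithinAt_iff_tendsto_slope.1 (hder.hasDerivWithinAt (s := Ioi x))
      have hdiffeq : Ioi x \ {x} = Ioi x := diff_singleton_eq_self (notMem_Ioi_self)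
      rw [hdiffeq] at hslope
      have hev : ∀ᶠ u in 𝓝[>] x, slope g x u < c + ε :=
        hslope.eventually_lt_const (by linarith)
      have hmem : Ioc x y ∈ 𝓝[>] x := Ioc_mem_nhdsGT hxy
      obtain ⟨u, hu1, hu2⟩ := (hev.and (eventually_of_mem hmem fun z hz => hz)).exists
      refine ⟨u, ?_, hu2⟩
      have hxu : x < u := hu2.1
      have hgu : g u - g x < (c + ε) * (u - x) := by
        have := hu1
        rw [slope_def_field, div_lt_iff₀ (by linarith : (0:ℝ) < u - x)] at this
        linarith [this]
      have hmle : m x ≤ m u := hmono hxu.le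
      show g u - g a ≤ (c + ε) * (u - a) + C * m u
      have hexp : (c + ε) * (u - a) = (c + ε) * (x - a) + (c + ε) * (u - x) := by ring
      rw [hexp]
      linarith [hgu, hxs', mul_le_mul_of_nonneg_left hmle hC0]
  have hall : Icc a b ⊆ s := hclosed.Icc_subset_of_forall_exists_gt has hstep
  have hb : g b - g a ≤ (c + ε) * (b - a) + C * m b := hall ⟨hab, le_rfl⟩
  have hmb : m b ≤ ε := by
    have h1 : m b ≤ (volume U).toReal :=
      ENNReal.toReal_mono hUfin (measure_mono Set.inter_subset_left)
    have h2 : (volume U).toReal ≤ ε := ENNReal.toReal_le_of_le_ofReal hεpos.le hUvol.le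
    linarith
  have hmu : ε * ((b - a) + C + 1) = ε' := by
    rw [hεdef]; field_simp
  have hexp1 : (c + ε) * (b - a) = c * (b - a) + ε * (b - a) := by ring
  have hexp2 : ε * ((b - a) + C + 1) = ε * (b - a) + C * ε + ε := by ring
  linarith [hb, mul_le_mul_of_nonneg_left hmb hC0, hεpos, hexp1, hexp2, hmu]

/-- Lemma 3 of the paper: singularity and `ρ`.
In the normal form (`λ0 = 1`) of the maximum principle for Problem (OC), with constant
Hamiltonian equal to `h`, if the switching function `l3` vanishes identically on some
nondegenerate subinterval `[ζ1, ζ2] ⊆ [0, tf]` (singular control), then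
`ρ = √(l1² + l2²)` satisfies `ρ = |a − h|` and `ρ ≠ 0`. -/
theorem stmt6 (tf a h : ℝ) (htf : 0 < tf) (ha : 0 < a)
    (θ v : ℝ → ℝ) (l1 l2 : ℝ) (l3 l4 : ℝ → ℝ)
    (hθlip : ∃ K : NNReal, LipschitzOnWith K θ (Icc 0 tf))
    (hvmeas : Measurable v)
    (hvbd : ∀ᵐ t ∂volume, t ∈ Icc (0:ℝ) tf → |v t| ≤ 1)
    (hθ' : ∀ᵐ t ∂volume, t ∈ Icc (0:ℝ) tf → HasDerivAt θ (a * v t) t)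
    (hl3lip : ∃ K : NNReal, LipschitzOnWith K l3 (Icc 0 tf))
    (hl4lip : ∃ K : NNReal, LipschitzOnWith K l4 (Icc 0 tf))
    (hl3' : ∀ᵐ t ∂volume, t ∈ Icc (0:ℝ) tf →
      HasDerivAt l3 (l1 * Real.sin (θ t) - l2 * Real.cos (θ t)) t)
    (hl4' : ∀ᵐ t ∂volume, t ∈ Icc (0:ℝ) tf →
      HasDerivAt l4 (-1 - l3 t * v t) t)
    (hl40 : l4 0 = 0) (hl4f : l4 tf = 0)
    (hH : ∀ᵐ t ∂volume, t ∈ Icc (0:ℝ) tf →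
      a + l1 * Real.cos (θ t) + l2 * Real.sin (θ t) + a * (l3 t * v t) = h)
    (hsing : ∃ ζ1 ζ2 : ℝ, 0 ≤ ζ1 ∧ ζ1 < ζ2 ∧ ζ2 ≤ tf ∧ ∀ t ∈ Icc ζ1 ζ2, l3 t = 0) :
    Real.sqrt (l1 ^ 2 + l2 ^ 2) = |a - h| ∧ Real.sqrt (l1 ^ 2 + l2 ^ 2) ≠ 0 := by
  obtain ⟨ζ1, ζ2, hζ1, hζ12, hζ2f, hl3z⟩ := hsing
  have hsub : Ioo ζ1 ζ2 ⊆ Icc 0 tf := fun t ht => ⟨hζ1.trans ht.1.le, ht.2.le.trans hζ2f⟩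
  -- pick a point of `Ioo ζ1 ζ2` where the a.e. conditions hold
  set G : Set ℝ := {t | (t ∈ Icc (0:ℝ) tf →
      HasDerivAt l3 (l1 * Real.sin (θ t) - l2 * Real.cos (θ t)) t) ∧
      (t ∈ Icc (0:ℝ) tf →
      a + l1 * Real.cos (θ t) + l2 * Real.sin (θ t) + a * (l3 t * v t) = h)} with hGdef
  have hG : ∀ᵐ t ∂volume, t ∈ G := hl3'.and hH
  have hGc : volume Gᶜ = 0 := by
    rw [Set.compl_def]
    exact ae_iff.1 hG
  have hne : (Ioo ζ1 ζ2 ∩ G).Nonempty := by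
    apply nonempty_of_measure_ne_zero (μ := volume)
    have heq : Ioo ζ1 ζ2 \ Gᶜ = Ioo ζ1 ζ2 ∩ G := by
      ext t; simp [Set.mem_diff]
    rw [← heq, measure_diff_null hGc, Real.volume_Ioo]
    simp only [ne_eq, ENNReal.ofReal_eq_zero, not_le]
    linarith
  obtain ⟨t, htI, htG⟩ := hne
  have htIcc : t ∈ Icc (0:ℝ) tf := hsub htI
  have hl3t : l3 t = 0 := hl3z t ⟨htI.1.le, htI.2.le⟩
  have hham : a + l1 * Real.cos (θ t) + l2 * Real.sin (θ t) + a * (l3 t * v t) = h :=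
    htG.2 htIcc
  have hder : HasDerivAt l3 (l1 * Real.sin (θ t) - l2 * Real.cos (θ t)) t := htG.1 htIcc
  have hzero : HasDerivAt l3 0 t := by
    have hev : l3 =ᶠ[nhds t] fun _ => (0:ℝ) := by
      filter_upwards [isOpen_Ioo.mem_nhds htI] with u hu
      exact hl3z u ⟨hu.1.le, hu.2.le⟩
    exact (hasDerivAt_const t (0:ℝ)).congr_of_eventuallyEq hev
  have h2 : l1 * Real.sin (θ t) - l2 * Real.cos (θ t) = 0 := hder.unique hzero
  have h1 : l1 * Real.cos (θ t) + l2 * Real.sin (θ t) = h - a := by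
    rw [hl3t] at hham; linarith [hham]
  have h3 : Real.sin (θ t) ^ 2 + Real.cos (θ t) ^ 2 = 1 := Real.sin_sq_add_cos_sq (θ t)
  have key : l1 ^ 2 + l2 ^ 2 = (h - a) ^ 2 := by
    linear_combination (l1 * Real.cos (θ t) + l2 * Real.sin (θ t) + (h - a)) * h1 +
      (l1 * Real.sin (θ t) - l2 * Real.cos (θ t)) * h2 - (l1 ^ 2 + l2 ^ 2) * h3
  have hmain : Real.sqrt (l1 ^ 2 + l2 ^ 2) = |a - h| := by
    rw [key, Real.sqrt_sq_eq_abs, abs_sub_comm]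
  refine ⟨hmain, ?_⟩
  intro hzero'
  -- if ρ = 0, then l1 = l2 = 0 and h = a
  have hah : a = h := by
    have := hmain ▸ hzero'
    have h4 : |a - h| = 0 := by linarith [this]
    have := abs_eq_zero.1 h4
    linarith
  have hl12 : l1 ^ 2 + l2 ^ 2 = 0 := by
    rw [key]; rw [← hah]; ring
  have hl1 : l1 = 0 := by nlinarith [sq_nonneg l1, sq_nonneg l2]
  have hl2 : l2 = 0 := by nlinarith [sq_nonneg l1, sq_nonneg l2]
  -- then l4' = -1 a.e., contradicting l4 0 = l4 tf = 0
  obtain ⟨K4, hK4⟩ := hl4lip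
  have hd : ∀ᵐ s ∂volume, s ∈ Ico (0:ℝ) tf → ∃ d : ℝ, HasDerivAt l4 d s ∧ d ≤ -1 := by
    filter_upwards [hl4', hH] with s hs1 hs2
    intro hsIco
    have hsIcc : s ∈ Icc (0:ℝ) tf := ⟨hsIco.1, hsIco.2.le⟩
    refine ⟨-1 - l3 s * v s, hs1 hsIcc, ?_⟩
    have := hs2 hsIcc
    rw [hl1, hl2, ← hah] at this
    have hlv : l3 s * v s = 0 := by
      have haa : a * (l3 s * v s) = 0 := by linarith
      rcases mul_eq_zero.1 haa with hc | hc
      · exact absurd hc ha.ne'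
      · exact hc
    rw [hlv]; norm_num
  have := lipschitzOn_sub_le_of_ae_deriv_le K4 l4 (-1) htf.le hK4 hd
  rw [hl40, hl4f] at this
  nlinarith [this, htf]
end
end

section
/- Let a > 0, h ∈ ℝ, and λ1, λ2 ∈ ℝ be constants, and set ρ = √(λ1² + λ2²). Let I be an interval and θ, v : I → ℝ and λ3 : I → ℝ (λ3 Lipschitz) satisfy, for a.e. t ∈ I: λ3'(t) = λ1·sin θ(t) − λ2·cos θ(t), λ3(t)·v(t) = −|λ3(t)|, and a + λ1·cos θ(t) + λ2·sin θ(t) + a·λ3(t)·v(t) = h. Then for a.e. t ∈ I: (λ3'(t))² + (a·|λ3(t)| − a + h)² = ρ². -/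
open Set MeasureTheory Real

noncomputable section

/-- Lemma 4 of the paper: the phase equation for the switching function.
If on an interval `I` the switching function `l3` satisfies
`l3' = l1 sin θ − l2 cos θ` a.e., the minimum condition gives `l3 v = −|l3|` a.e., and
the Hamiltonian `a + l1 cos θ + l2 sin θ + a l3 v` is a.e. equal to the constant `h`,
then a.e. on `I` one has `(l3')² + (a|l3| − a + h)² = ρ²` with `ρ = √(l1² + l2²)`. -/
theorem stmt7 (a h l1 l2 : ℝ) (ha : 0 < a)
    (I : Set ℝ) (hI : I.OrdConnected)
    (θ v l3 : ℝ → ℝ)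
    (hl3lip : ∃ K : NNReal, LipschitzOnWith K l3 I)
    (hl3' : ∀ᵐ t ∂volume, t ∈ I →
      HasDerivAt l3 (l1 * Real.sin (θ t) - l2 * Real.cos (θ t)) t)
    (hmin : ∀ᵐ t ∂volume, t ∈ I → l3 t * v t = -|l3 t|)
    (hH : ∀ᵐ t ∂volume, t ∈ I →
      a + l1 * Real.cos (θ t) + l2 * Real.sin (θ t) + a * (l3 t * v t) = h) :
    ∀ᵐ t ∂volume, t ∈ I →
      (deriv l3 t) ^ 2 + (a * |l3 t| - a + h) ^ 2 = Real.sqrt (l1 ^ 2 + l2 ^ 2) ^ 2 := by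
  filter_upwards [hl3', hmin, hH] with t h1 h2 h3 ht
  have hd := (h1 ht).deriv
  have hm := h2 ht
  have hh := h3 ht
  rw [hm] at hh
  have key : a * |l3 t| - a + h = l1 * Real.cos (θ t) + l2 * Real.sin (θ t) := by
    nlinarith [hh]
  rw [hd, key, Real.sq_sqrt (by positivity : (0:ℝ) ≤ l1 ^ 2 + l2 ^ 2)]
  nlinarith [Real.sin_sq_add_cos_sq (θ t)]
end
end

section
/- Let z0 ≠ zf ∈ ℝ², d = ‖zf − z0‖, t_f > d, and v = (zf − z0)/d. Let α be the unique solution in (0, π) of sin α = (d/t_f)·α. If α − sin α < π/2 (equivalently, d/t_f > b, where b is the threshold defined by sinc⁻¹(b)(1 − b) = π/2), then there exists an admissible curve for the data (z0, v, zf, v, t_f) whose maximum curvature is strictly less than 2π/(t_f − d). Consequently, any admissible curve for this data with maximum curvature equal to 2π/(t_f − d) — in particular any path of type SOS, consisting of a straight segment, a full circle of radius (t_f − d)/(2π), and a straight segment — is not a minimiser of Problem (P). -/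
/-!
Steer with a heading angle that zigzags `0 → α → -α → 0` at the constant rate `κ = 4α / tf`.
The heading is odd about `tf / 2`, so the lateral displacement vanishes, while the forward one
is `4 sin α / κ = tf sinc α = d`: the curve joins the data. Its curvature `κ` is below
`2π / (tf - d)` exactly when `2 (α - sin α) < π`.
-/

open Set MeasureTheory Real

noncomputable section

def rot (θ : ℝ) (v : Pt) : Pt := cos θ • v + sin θ • J v

lemma norm_smul_add_smul_J (a b : ℝ) (v : Pt) : ‖a • v + b • J v‖ = √(a ^ 2 + b ^ 2) * ‖v‖ := by
  rw [EuclideanSpace.norm_eq, EuclideanSpace.norm_eq, ← Real.sqrt_mul (by positivity)]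
  congr 1
  simp only [Fin.sum_univ_two]
  simp [J, pt, Real.norm_eq_abs, sq_abs]
  ring

lemma norm_rot (θ : ℝ) (v : Pt) : ‖rot θ v‖ = ‖v‖ := by
  simp [rot, norm_smul_add_smul_J]

lemma rot_zero (v : Pt) : rot 0 v = v := by
  simp [rot]

lemma dist_rot_le (θ φ : ℝ) (v : Pt) : dist (rot θ v) (rot φ v) ≤ |θ - φ| * ‖v‖ := by
  have hsub : rot θ v - rot φ v = (cos θ - cos φ) • v + (sin θ - sin φ) • J v := by
    simp only [rot, sub_smul]; abel
  have hchord : (cos θ - cos φ) ^ 2 + (sin θ - sin φ) ^ 2 = (2 * sin ((θ - φ) / 2)) ^ 2 := by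
    rw [cos_sub_cos, sin_sub_sin]
    linear_combination (4 * sin ((θ - φ) / 2) ^ 2) * sin_sq_add_cos_sq ((θ + φ) / 2)
  rw [dist_eq_norm, hsub, norm_smul_add_smul_J, hchord, Real.sqrt_sq_eq_abs]
  gcongr ?_ * _
  calc |2 * sin ((θ - φ) / 2)| = 2 * |sin ((θ - φ) / 2)| := by rw [abs_mul, abs_two]
    _ ≤ 2 * |(θ - φ) / 2| := mul_le_mul_of_nonneg_left abs_sin_le_abs zero_le_two
    _ = |θ - φ| := by rw [abs_div, abs_two]; ring

lemma LipschitzWith.rot {K : NNReal} {θ : ℝ → ℝ} (hθ : LipschitzWith K θ) {v : Pt}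
    (hv : ‖v‖ = 1) : LipschitzWith K (fun t => rot (θ t) v) :=
  LipschitzWith.of_dist_le_mul fun s t => by
    simpa [hv, ← Real.dist_eq] using (dist_rot_le (θ s) (θ t) v).trans
      (by rw [hv, mul_one, ← Real.dist_eq]; exact hθ.dist_le_mul s t)

lemma continuous_rot (v : Pt) : Continuous (fun θ => rot θ v) := by
  unfold rot; fun_prop

lemma integral_rot (a b : ℝ) (v : Pt) :
    ∫ θ in a..b, rot θ v = (sin b - sin a) • v + (cos a - cos b) • J v := by
  simp only [rot]
  rw [intervalIntegral.integral_add (by apply Continuous.intervalIntegrable; fun_prop)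
      (by apply Continuous.intervalIntegrable; fun_prop),
    intervalIntegral.integral_smul_const, intervalIntegral.integral_smul_const,
    integral_cos, integral_sin]

lemma maxCurvOn_le_of_lipschitzOnWith {s : Set ℝ} {f : ℝ → Pt} {K : NNReal}
    (h : LipschitzOnWith K f s) : maxCurvOn s f ≤ K :=
  csInf_le ⟨0, fun _ ha => ha.1⟩ ⟨K.2, by rwa [Real.toNNReal_coe]⟩

def zigzag (α s : ℝ) : ℝ := s + 2 * α - 2 * max α (min s (3 * α))

lemma lipschitzWith_zigzag (α : ℝ) : LipschitzWith 1 (zigzag α) := by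
  refine LipschitzWith.of_le_add fun s t => ?_
  rw [Real.dist_eq]
  simp only [zigzag, max_def, min_def]
  split_ifs <;> cases abs_cases (s - t) <;> linarith

section zigzag

variable {α s : ℝ}

lemma zigzag_of_le (hα : 0 ≤ α) (hs : s ≤ α) : zigzag α s = s := by
  rw [zigzag, min_eq_left (by linarith), max_eq_left hs]; ring

lemma zigzag_of_mem_Icc (hs : s ∈ Icc α (3 * α)) : zigzag α s = 2 * α - s := by
  rw [zigzag, min_eq_left hs.2, max_eq_right hs.1]; ring

lemma zigzag_of_ge (hα : 0 ≤ α) (hs : 3 * α ≤ s) : zigzag α s = s - 4 * α := by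
  rw [zigzag, min_eq_right hs, max_eq_right (by linarith)]; ring

lemma zigzag_zero (hα : 0 ≤ α) : zigzag α 0 = 0 := zigzag_of_le hα hα

lemma zigzag_four_mul (hα : 0 ≤ α) : zigzag α (4 * α) = 0 := by
  rw [zigzag_of_ge hα (by linarith), sub_self]

lemma integral_comp_zigzag {E : Type*} [NormedAddCommGroup E] [NormedSpace ℝ E]
    {f : ℝ → E} (hf : Continuous f) (hα : 0 ≤ α) :
    ∫ s in 0..4 * α, f (zigzag α s) =
      (∫ s in 0..α, f s) + (∫ s in -α..α, f s) + ∫ s in -α..0, f s := by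
  have hint : ∀ a b, IntervalIntegrable (fun s => f (zigzag α s)) volume a b := fun a b =>
    (hf.comp (lipschitzWith_zigzag α).continuous).intervalIntegrable a b
  have h₁ : ∫ s in 0..α, f (zigzag α s) = ∫ s in 0..α, f s :=
    intervalIntegral.integral_congr fun s hs => by
      rw [uIcc_of_le hα] at hs; simp only [zigzag_of_le hα hs.2]
  have h₂ : ∫ s in α..3 * α, f (zigzag α s) = ∫ s in -α..α, f s := by
    rw [intervalIntegral.integral_congr (g := fun s => f (2 * α - s)) fun s hs => by
        rw [uIcc_of_le (by linarith)] at hs; simp only [zigzag_of_mem_Icc hs],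
      intervalIntegral.integral_comp_sub_left]
    ring_nf
  have h₃ : ∫ s in 3 * α..4 * α, f (zigzag α s) = ∫ s in -α..0, f s := by
    rw [intervalIntegral.integral_congr (g := fun s => f (s - 4 * α)) fun s hs => by
        rw [uIcc_of_le (by linarith)] at hs; simp only [zigzag_of_ge hα hs.1],
      intervalIntegral.integral_comp_sub_right]
    ring_nf
  rw [← intervalIntegral.integral_add_adjacent_intervals (hint 0 (3 * α)) (hint _ _),
    ← intervalIntegral.integral_add_adjacent_intervals (hint 0 α) (hint _ _), h₁, h₂, h₃]

lemma integral_rot_zigzag (hα : 0 ≤ α) (v : Pt) :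
    ∫ s in 0..4 * α, rot (zigzag α s) v = (4 * sin α) • v := by
  rw [integral_comp_zigzag (continuous_rot v) hα, integral_rot, integral_rot, integral_rot]
  simp only [sin_neg, cos_neg, sin_zero, cos_zero]
  module

end zigzag

lemma admissibleOn_integral_rot {K : NNReal} {θ : ℝ → ℝ} (hθ : LipschitzWith K θ) {tf : ℝ}
    {p0 p1 v : Pt} (hv : ‖v‖ = 1) (h0 : θ 0 = 0) (htf : θ tf = 0)
    (hint : ∫ t in 0..tf, rot (θ t) v = p1 - p0) :
    AdmissibleOn 0 tf p0 v p1 v (fun t => p0 + ∫ s in 0..t, rot (θ s) v)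
      (fun t => rot (θ t) v) := by
  have hcont : Continuous fun t => rot (θ t) v := (continuous_rot v).comp hθ.continuous
  refine ⟨fun t _ => ?_, ⟨K, (hθ.rot hv).lipschitzOnWith⟩, fun t _ => by rw [norm_rot, hv],
    by simp, by simp [hint], by simp [h0, rot_zero], by simp [htf, rot_zero]⟩
  exact ((hcont.integral_hasStrictDerivAt 0 t).hasDerivAt.const_add p0).hasDerivWithinAt

lemma exists_admissibleOn_maxCurvOn_le {α tf : ℝ} (hα : 0 < α) (htf : 0 < tf) (p0 : Pt)
    {v : Pt} (hv : ‖v‖ = 1) :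
    ∃ w w' : ℝ → Pt, AdmissibleOn 0 tf p0 v (p0 + (tf * sin α / α) • v) v w w' ∧
      maxCurvOn (Icc 0 tf) w' ≤ 4 * α / tf := by
  set κ := 4 * α / tf with hκ_def
  have hκ : 0 < κ := by positivity
  have hκtf : κ * tf = 4 * α := by rw [hκ_def]; field_simp
  have hθ : LipschitzWith ‖κ‖₊ fun t => zigzag α (κ * t) := by
    have := (lipschitzWith_zigzag α).comp (lipschitzWith_smul (β := ℝ) κ)
    rwa [one_mul] at this
  have hint : ∫ t in 0..tf, rot (zigzag α (κ * t)) v = (tf * sin α / α) • v := by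
    rw [intervalIntegral.integral_comp_mul_left (fun s => rot (zigzag α s) v) hκ.ne', mul_zero,
      hκtf, integral_rot_zigzag hα.le, smul_smul]
    congr 1
    rw [hκ_def]
    field_simp
  refine ⟨_, _, admissibleOn_integral_rot hθ hv (by simp [zigzag_zero hα.le])
    (by rw [hκtf, zigzag_four_mul hα.le]) (by rw [hint, add_sub_cancel_left]), ?_⟩
  simpa [Real.norm_of_nonneg hκ.le] using
    maxCurvOn_le_of_lipschitzOnWith (hθ.rot hv).lipschitzOnWith

/-- Proposition 2 of the paper: non-optimality of `SOS` paths.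
Let `d = ‖zf − z0‖ < tf`, `v` the unit vector from `z0` to `zf`, and `α ∈ (0, π)` the
solution of `sin α = (d/tf) α`. If `α − sin α < π/2` (i.e. `d/tf > b`), then some
admissible curve for the data `(z0, v, zf, v, tf)` has maximum curvature strictly less
than `2π/(tf − d)`; consequently no admissible curve of maximum curvature `2π/(tf − d)`
— in particular no path of type `SOS` — is a minimiser of Problem (P). -/
theorem stmt11 (z0 zf : Pt) (hne : z0 ≠ zf) (tf α d : ℝ)
    (hd : d = ‖zf - z0‖) (htf : d < tf)
    (v : Pt) (hv : v = d⁻¹ • (zf - z0))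
    (hα : α ∈ Ioo (0:ℝ) π) (hαeq : Real.sin α = (d / tf) * α)
    (hcrit : α - Real.sin α < π / 2) :
    (∃ w w' : ℝ → Pt, AdmissibleOn 0 tf z0 v zf v w w' ∧
        maxCurvOn (Icc 0 tf) w' < 2 * π / (tf - d)) ∧
      ∀ z z' : ℝ → Pt, AdmissibleOn 0 tf z0 v zf v z z' →
        maxCurvOn (Icc 0 tf) z' = 2 * π / (tf - d) →
          ¬ ∀ w w' : ℝ → Pt, AdmissibleOn 0 tf z0 v zf v w w' →
              maxCurvOn (Icc 0 tf) z' ≤ maxCurvOn (Icc 0 tf) w' := by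
  have hd0 : 0 < d := hd ▸ norm_pos_iff.mpr (sub_ne_zero.mpr hne.symm)
  have htf0 : 0 < tf := hd0.trans htf
  have hv1 : ‖v‖ = 1 := by
    rw [hv, norm_smul, norm_inv, ← hd, Real.norm_of_nonneg hd0.le, inv_mul_cancel₀ hd0.ne']
  have hzf : z0 + (tf * sin α / α) • v = zf := by
    rw [hαeq, hv, smul_smul, show tf * (d / tf * α) / α * d⁻¹ = 1 by field_simp [hα.1.ne'],
      one_smul, add_sub_cancel]
  have hcurv : 4 * α / tf < 2 * π / (tf - d) := by
    rw [div_lt_div_iff₀ htf0 (sub_pos.mpr htf)]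
    have hαd : α * d = tf * sin α := by rw [hαeq]; field_simp
    linarith [mul_lt_mul_of_pos_left hcrit htf0]
  obtain ⟨w, w', hadm, hle⟩ := exists_admissibleOn_maxCurvOn_le hα.1 htf0 z0 hv1
  rw [hzf] at hadm
  exact ⟨⟨w, w', hadm, hle.trans_lt hcurv⟩, fun z z' _ hz hmin => by
    linarith [hmin w w' hadm]⟩
end
end

section
/- Let π/2 < β < π, and set z0 = (1, 0), v0 = (0, 1), zf = (cos β, sin β), vf = (−sin β, cos β), and t_f = β + 2π. Then there exists an admissible curve for the data (z0, v0, zf, vf, t_f) with maximum curvature strictly less than 1. Consequently, any admissible curve for this data with maximum curvature equal to 1 — in particular the path of type COC that follows the unit circle from z0 to zf with an inserted full unit-radius loop — is not a minimiser of Problem (P). (A COC path with endpoints separated by angle β on a unit circle can be optimal only if β ≤ π/2.) -/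
open Set MeasureTheory Real

noncomputable section

/-!
Instead of the unit circle with a full loop, take three arcs of a common curvature `a < 1`,
turning right, left and right again, with the two outer arcs of equal length `p`. The total
turning `a (L - 4p) = β` fixes `p`, and integrating the unit tangent arc by arc shows that the
curve ends at `(cos β, sin β)` exactly when `2 sin ((a L + β) / 4) = (1 + a) sin (β / 2)`.
At `a = β / L` the left side exceeds the right one, and at `a = 1` it equals `2 cos (β / 2)`,
which is smaller than `2 sin (β / 2)` because `β > π / 2`; so the closing condition has a root
`a < 1`. Integrating an `a`-Lipschitz unit tangent gives an admissible curve of maximum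
curvature at most `a`.
-/

namespace COCNotOptimal

lemma pt_add (x y x' y' : ℝ) : pt x y + pt x' y' = pt (x + x') (y + y') := by
  ext i; fin_cases i <;> simp [pt]

lemma smul_pt (r x y : ℝ) : r • pt x y = pt (r * x) (r * y) := by
  ext i; fin_cases i <;> simp [pt]

lemma norm_pt (x y : ℝ) : ‖pt x y‖ = √(x ^ 2 + y ^ 2) := by
  simp [EuclideanSpace.norm_eq, Fin.sum_univ_two, pt, sq_abs]

lemma hasDerivAt_pt {X Y : ℝ → ℝ} {dx dy t : ℝ} (hX : HasDerivAt X dx t)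
    (hY : HasDerivAt Y dy t) : HasDerivAt (fun s => pt (X s) (Y s)) (pt dx dy) t := by
  have h : HasDerivAt (fun s => ![X s, Y s]) ![dx, dy] t := by
    rw [hasDerivAt_pi]
    intro i
    fin_cases i
    · simpa using hX
    · simpa using hY
  exact (EuclideanSpace.equiv (Fin 2) ℝ).symm.hasFDerivAt.comp_hasDerivAt t h

def unitVec (θ : ℝ) : Pt := pt (cos θ) (sin θ)

lemma norm_unitVec (θ : ℝ) : ‖unitVec θ‖ = 1 := by
  simp [unitVec, norm_pt]

lemma hasDerivAt_unitVec (θ : ℝ) : HasDerivAt unitVec (pt (-sin θ) (cos θ)) θ :=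
  hasDerivAt_pt (hasDerivAt_cos θ) (hasDerivAt_sin θ)

lemma lipschitzWith_unitVec : LipschitzWith 1 unitVec := by
  refine lipschitzWith_of_nnnorm_deriv_le (fun θ => (hasDerivAt_unitVec θ).differentiableAt)
    fun θ => ?_
  rw [(hasDerivAt_unitVec θ).deriv, ← NNReal.coe_le_coe, coe_nnnorm, norm_pt]
  simp

/-- The right side is the chord of the arc, turned by `-π/2` and scaled by the radius `ω⁻¹`. -/
lemma integral_unitVec_of_eqOn_affine {θ : ℝ → ℝ} {p q φ ω : ℝ} (hω : ω ≠ 0)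
    (hθ : EqOn θ (fun t => φ + ω * t) (uIcc p q)) :
    ∫ t in p..q, unitVec (θ t) = ω⁻¹ • pt (sin (θ q) - sin (θ p)) (cos (θ p) - cos (θ q)) := by
  have hderiv : ∀ t, HasDerivAt (fun s => pt (sin (φ + ω * s) / ω) (cos (φ + ω * s) / -ω))
      (unitVec (φ + ω * t)) t := by
    intro t
    have hlin : HasDerivAt (fun s => φ + ω * s) ω t := by
      simpa using ((hasDerivAt_id t).const_mul ω).const_add φ
    convert hasDerivAt_pt (hlin.sin.div_const ω) (hlin.cos.div_const (-ω)) using 1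
    simp only [unitVec]
    congr 1 <;> field_simp
  rw [intervalIntegral.integral_congr (fun t ht => congrArg unitVec (hθ ht)),
    intervalIntegral.integral_eq_sub_of_hasDerivAt (fun t _ => hderiv t)
      ((lipschitzWith_unitVec.continuous.comp (by fun_prop)).intervalIntegrable _ _),
    hθ left_mem_uIcc, hθ right_mem_uIcc]
  ext i; fin_cases i <;> simp [pt] <;> ring

lemma admissibleOn_integral {u : ℝ → Pt} {K : NNReal} (L : ℝ) (p0 : Pt) (hu : LipschitzWith K u)
    (hnorm : ∀ t, ‖u t‖ = 1) :
    AdmissibleOn 0 L p0 (u 0) (p0 + ∫ t in 0..L, u t) (u L) (fun t => p0 + ∫ s in 0..t, u s) u :=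
  ⟨fun t _ =>
    ((hu.continuous.integral_hasStrictDerivAt 0 t).hasDerivAt.const_add p0).hasDerivWithinAt,
    ⟨K, hu.lipschitzOnWith⟩, fun t _ => hnorm t, by simp, rfl, rfl, rfl⟩

lemma maxCurvOn_le {s : Set ℝ} {z' : ℝ → Pt} {a : ℝ} (ha : 0 ≤ a)
    (h : LipschitzOnWith a.toNNReal z' s) : maxCurvOn s z' ≤ a :=
  csInf_le ⟨0, fun _ hc => hc.1⟩ ⟨ha, h⟩

def zigzag (p q t : ℝ) : ℝ := max (-t) (min (t - 2 * p) (2 * q - 2 * p - t))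

lemma zigzag_of_le {p q t : ℝ} (ht : t ≤ p) : zigzag p q t = -t :=
  max_eq_left ((min_le_left _ _).trans (by linarith))

lemma zigzag_of_mem_Icc {p q t : ℝ} (ht : t ∈ Icc p q) : zigzag p q t = t - 2 * p := by
  rw [zigzag, min_eq_left (by linarith [ht.2]), max_eq_right (by linarith [ht.1])]

lemma zigzag_of_ge {p q t : ℝ} (hpq : p ≤ q) (ht : q ≤ t) : zigzag p q t = 2 * q - 2 * p - t := by
  rw [zigzag, min_eq_right (by linarith), max_eq_right (by linarith)]

lemma lipschitzWith_zigzag (p q : ℝ) : LipschitzWith 1 (zigzag p q) := by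
  have h := (IsometryEquiv.neg ℝ).isometry.lipschitz.max
    ((IsometryEquiv.subRight (2 * p)).isometry.lipschitz.min
      (IsometryEquiv.subLeft (2 * q - 2 * p)).isometry.lipschitz)
  simp only [max_self] at h
  exact h

section Construction

variable (β a L : ℝ)

def switchTime : ℝ := (a * L - β) / (4 * a)

/-- The tangent turns right at rate `a` until `switchTime`, then left until `L - switchTime`,
then right again: three arcs of curvature `a`. -/
def tangentAngle (t : ℝ) : ℝ := π / 2 + a * zigzag (switchTime β a L) (L - switchTime β a L) t

def zigzagTangent (t : ℝ) : Pt := unitVec (tangentAngle β a L t)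

variable {β a L}

lemma lipschitzWith_tangentAngle (ha : 0 ≤ a) :
    LipschitzWith a.toNNReal (tangentAngle β a L) := by
  refine LipschitzWith.of_dist_le_mul fun s t => ?_
  have hzig := (lipschitzWith_zigzag (switchTime β a L) (L - switchTime β a L)).dist_le_mul s t
  rw [NNReal.coe_one, one_mul] at hzig
  rw [Real.coe_toNNReal a ha, Real.dist_eq, tangentAngle, tangentAngle, add_sub_add_left_eq_sub,
    ← mul_sub, abs_mul, abs_of_nonneg ha, ← Real.dist_eq]
  exact mul_le_mul_of_nonneg_left hzig ha

lemma lipschitzWith_zigzagTangent (ha : 0 ≤ a) :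
    LipschitzWith a.toNNReal (zigzagTangent β a L) := by
  have h := lipschitzWith_unitVec.comp (lipschitzWith_tangentAngle (β := β) (L := L) ha)
  rwa [one_mul] at h

lemma switchTime_nonneg (ha : 0 < a) (hβL : β ≤ a * L) : 0 ≤ switchTime β a L :=
  div_nonneg (by linarith) (by positivity)

lemma switchTime_le_sub (ha : 0 < a) (hβ : 0 ≤ β) (hβL : β ≤ a * L) :
    switchTime β a L ≤ L - switchTime β a L := by
  rw [switchTime, le_sub_iff_add_le, ← two_mul, mul_div_assoc', div_le_iff₀ (by positivity)]
  nlinarith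

lemma mul_switchTime (ha : a ≠ 0) : a * switchTime β a L = (a * L - β) / 4 := by
  rw [switchTime]; field_simp

lemma tangentAngle_zero (ha : 0 < a) (hβL : β ≤ a * L) : tangentAngle β a L 0 = π / 2 := by
  simp [tangentAngle, zigzag_of_le (switchTime_nonneg ha hβL)]

lemma tangentAngle_self (ha : 0 < a) (hβ : 0 ≤ β) (hβL : β ≤ a * L) :
    tangentAngle β a L L = β + π / 2 := by
  rw [tangentAngle, zigzag_of_ge (switchTime_le_sub ha hβ hβL)
    (sub_le_self _ (switchTime_nonneg ha hβL))]
  linear_combination -4 * mul_switchTime (L := L) (β := β) ha.ne'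

lemma integral_zigzagTangent (ha : 0 < a) (hβ : 0 ≤ β) (hβL : β ≤ a * L) :
    ∫ t in 0..L, zigzagTangent β a L t =
      a⁻¹ • pt (1 - 2 * cos ((a * L + β) / 4 - β / 2) + 2 * cos ((a * L + β) / 4 + β / 2) - cos β)
        (2 * sin ((a * L + β) / 4 - β / 2) + 2 * sin ((a * L + β) / 4 + β / 2) - sin β) := by
  set p := switchTime β a L with hp
  have hp0 : 0 ≤ p := switchTime_nonneg ha hβL
  have hpq : p ≤ L - p := switchTime_le_sub ha hβ hβL
  have hap : a * p = (a * L - β) / 4 := mul_switchTime ha.ne'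
  have hint : ∀ x y, IntervalIntegrable (zigzagTangent β a L) volume x y := fun x y =>
    (lipschitzWith_zigzagTangent ha.le).continuous.intervalIntegrable x y
  have arc1 := integral_unitVec_of_eqOn_affine (θ := tangentAngle β a L) (p := 0) (q := p)
    (φ := π / 2) (neg_ne_zero.2 ha.ne') fun t ht => by
      rw [uIcc_of_le hp0] at ht
      simp only [tangentAngle, ← hp, zigzag_of_le ht.2]; ring
  have arc2 := integral_unitVec_of_eqOn_affine (θ := tangentAngle β a L) (p := p) (q := L - p)
    (φ := π / 2 - 2 * a * p) ha.ne' fun t ht => by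
      rw [uIcc_of_le hpq] at ht
      simp only [tangentAngle, ← hp, zigzag_of_mem_Icc ht]; ring
  have arc3 := integral_unitVec_of_eqOn_affine (θ := tangentAngle β a L) (p := L - p) (q := L)
    (φ := π / 2 + a * (2 * L - 4 * p)) (neg_ne_zero.2 ha.ne') fun t ht => by
      rw [uIcc_of_le (sub_le_self _ hp0)] at ht
      simp only [tangentAngle, ← hp, zigzag_of_ge hpq ht.1]; ring
  have θp : tangentAngle β a L p = π / 2 - ((a * L + β) / 4 - β / 2) := by
    rw [tangentAngle, zigzag_of_le le_rfl]; linear_combination -hap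
  have θq : tangentAngle β a L (L - p) = (a * L + β) / 4 + β / 2 + π / 2 := by
    rw [tangentAngle, zigzag_of_mem_Icc ⟨hpq, le_rfl⟩]; linear_combination -3 * hap
  rw [← intervalIntegral.integral_add_adjacent_intervals (hint 0 p) (hint p L),
    ← intervalIntegral.integral_add_adjacent_intervals (hint p (L - p)) (hint (L - p) L)]
  unfold zigzagTangent
  rw [arc1, arc2, arc3, tangentAngle_zero ha hβL, tangentAngle_self ha hβ hβL, θp, θq]
  ext i
  fin_cases i <;> simp [pt, sin_pi_div_two_sub, cos_pi_div_two_sub, sin_add_pi_div_two,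
    cos_add_pi_div_two] <;> field_simp <;> ring

lemma add_integral_zigzagTangent (ha : 0 < a) (hβ : 0 ≤ β) (hβL : β ≤ a * L)
    (hclose : 2 * sin ((a * L + β) / 4) = (1 + a) * sin (β / 2)) :
    pt 1 0 + ∫ t in 0..L, zigzagTangent β a L t = pt (cos β) (sin β) := by
  have hcosβ : cos β = 1 - 2 * sin (β / 2) ^ 2 := by
    have h := cos_two_mul (β / 2)
    rw [mul_div_cancel₀ β two_ne_zero] at h
    linear_combination h + 2 * cos_sq_add_sin_sq (β / 2)
  have hsinβ : sin β = 2 * sin (β / 2) * cos (β / 2) := by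
    rw [← sin_two_mul, mul_div_cancel₀ β two_ne_zero]
  rw [integral_zigzagTangent ha hβ hβL, smul_pt, pt_add, hcosβ, hsinβ]
  generalize (a * L + β) / 4 = c at hclose ⊢
  generalize β / 2 = b at hclose ⊢
  have hcos : cos (c - b) - cos (c + b) = 2 * sin c * sin b := by
    rw [cos_sub, cos_add]; ring
  have hsin : sin (c - b) + sin (c + b) = 2 * sin c * cos b := by
    rw [sin_sub, sin_add]; ring
  congr 1
  · field_simp
    linear_combination -2 * hcos - 2 * sin b * hclose
  · field_simp
    linear_combination 2 * hsin + 2 * cos b * hclose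

lemma zigzagTangent_zero (ha : 0 < a) (hβL : β ≤ a * L) : zigzagTangent β a L 0 = pt 0 1 := by
  simp [zigzagTangent, tangentAngle_zero ha hβL, unitVec]

lemma zigzagTangent_self (ha : 0 < a) (hβ : 0 ≤ β) (hβL : β ≤ a * L) :
    zigzagTangent β a L L = pt (-sin β) (cos β) := by
  simp [zigzagTangent, tangentAngle_self ha hβ hβL, unitVec, cos_add_pi_div_two,
    sin_add_pi_div_two]

lemma admissibleOn_zigzag (ha : 0 < a) (hβ : 0 ≤ β) (hβL : β ≤ a * L)
    (hclose : 2 * sin ((a * L + β) / 4) = (1 + a) * sin (β / 2)) :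
    AdmissibleOn 0 L (pt 1 0) (pt 0 1) (pt (cos β) (sin β)) (pt (-sin β) (cos β))
      (fun t => pt 1 0 + ∫ s in 0..t, zigzagTangent β a L s) (zigzagTangent β a L) := by
  have h := admissibleOn_integral L (pt 1 0)
    (lipschitzWith_zigzagTangent (β := β) (L := L) ha.le) fun t => norm_unitVec _
  rwa [add_integral_zigzagTangent ha hβ hβL hclose, zigzagTangent_zero ha hβL,
    zigzagTangent_self ha hβ hβL] at h

end Construction

lemma exists_closing_curvature {β : ℝ} (hβ1 : π / 2 < β) (hβ2 : β < π) :
    ∃ a ∈ Ioo (β / (β + 2 * π)) 1,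
      2 * sin ((a * (β + 2 * π) + β) / 4) = (1 + a) * sin (β / 2) := by
  have hL : 0 < β + 2 * π := by linarith [pi_pos]
  have hβL : β / (β + 2 * π) < 1 := (div_lt_one hL).2 (by linarith [pi_pos])
  have hsin : 0 < sin (β / 2) := sin_pos_of_pos_of_lt_pi (by linarith [pi_pos]) (by linarith)
  have hcos : cos (β / 2) < sin (β / 2) := by
    rw [← sin_pi_div_two_sub]
    exact sin_lt_sin_of_lt_of_le_pi_div_two (by linarith) (by linarith) (by linarith)
  have hstart : 0 < 2 * sin ((β / (β + 2 * π) * (β + 2 * π) + β) / 4)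
      - (1 + β / (β + 2 * π)) * sin (β / 2) := by
    rw [div_mul_cancel₀ β hL.ne', show (β + β) / 4 = β / 2 by ring]
    nlinarith
  have hend : 2 * sin ((1 * (β + 2 * π) + β) / 4) - (1 + 1) * sin (β / 2) < 0 := by
    rw [show (1 * (β + 2 * π) + β) / 4 = β / 2 + π / 2 by ring, sin_add_pi_div_two]
    linarith
  obtain ⟨a, ha, hzero⟩ := intermediate_value_Ioo' hβL.le
    (f := fun x => 2 * sin ((x * (β + 2 * π) + β) / 4) - (1 + x) * sin (β / 2)) (by fun_prop)
    ⟨hend, hstart⟩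
  exact ⟨a, ha, sub_eq_zero.1 hzero⟩

end COCNotOptimal

/-- Proposition 3 of the paper: a `COC` path with separation angle
`β > π/2` is not optimal. For endpoints on the unit circle separated by the angle
`β ∈ (π/2, π)`, with tangents along the circle and length `tf = β + 2π`, some admissible
curve has maximum curvature strictly less than `1`; consequently no admissible curve of
maximum curvature `1` — in particular the `COC` path along the unit circle with an inserted
full unit loop — is a minimiser of Problem (P). -/
theorem stmt14 (β : ℝ) (hβ1 : π / 2 < β) (hβ2 : β < π) :
    (∃ w w' : ℝ → Pt,
        AdmissibleOn 0 (β + 2 * π) (pt 1 0) (pt 0 1)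
          (pt (Real.cos β) (Real.sin β)) (pt (-Real.sin β) (Real.cos β)) w w' ∧
        maxCurvOn (Icc 0 (β + 2 * π)) w' < 1) ∧
      ∀ z z' : ℝ → Pt,
        AdmissibleOn 0 (β + 2 * π) (pt 1 0) (pt 0 1)
          (pt (Real.cos β) (Real.sin β)) (pt (-Real.sin β) (Real.cos β)) z z' →
        maxCurvOn (Icc 0 (β + 2 * π)) z' = 1 →
          ¬ ∀ w w' : ℝ → Pt,
              AdmissibleOn 0 (β + 2 * π) (pt 1 0) (pt 0 1)
                (pt (Real.cos β) (Real.sin β)) (pt (-Real.sin β) (Real.cos β)) w w' →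
                maxCurvOn (Icc 0 (β + 2 * π)) z' ≤ maxCurvOn (Icc 0 (β + 2 * π)) w' := by
  obtain ⟨a, ⟨hβa, ha1⟩, hclose⟩ := COCNotOptimal.exists_closing_curvature hβ1 hβ2
  have hβ0 : 0 < β := by linarith [pi_pos]
  have hL : 0 < β + 2 * π := by linarith [pi_pos]
  have ha0 : 0 < a := (div_pos hβ0 hL).trans hβa
  have hβL : β ≤ a * (β + 2 * π) := ((div_lt_iff₀ hL).1 hβa).le
  have hadm := COCNotOptimal.admissibleOn_zigzag ha0 hβ0.le hβL hclose
  have hcurv : maxCurvOn (Icc 0 (β + 2 * π)) (COCNotOptimal.zigzagTangent β a (β + 2 * π)) < 1 :=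
    (COCNotOptimal.maxCurvOn_le ha0.le
      (COCNotOptimal.lipschitzWith_zigzagTangent ha0.le).lipschitzOnWith).trans_lt ha1
  refine ⟨⟨_, _, hadm, hcurv⟩, fun z z' _ hz' hmin => ?_⟩
  have := hmin _ _ hadm
  linarith
end
end
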